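/- arXiv:1309.7712 — 7 statements merged into one kernel-verified Lean document; each statement's English description precedes it below -/
import Mathlib

section
/- If tr(R) = N_t, then the channel-estimation MSE of the optimal training matrix X_opt = √ρ · U_{[1:T]} equals MSE(X_opt) = 1 − (1/N_t) · Σ_{t=1}^{T} ρ λ_t² / (ρ λ_t + 1); equivalently, tr(R X_opt (I_T + X_opt^H R X_opt)^{-1} X_opt^H R) = Σ_{t=1}^{T} ρ λ_t² / (ρ λ_t + 1). -/
open Matrix BigOperators

/-- with `tr(R) = N_t`, the optimal training matrix
`X_opt = √ρ · U_{[1:T]}` satisfies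
`MSE(X_opt) = 1 - (1/N_t) Σ_{t=1}^T ρ λ_t² / (ρ λ_t + 1)`, equivalently
`tr(R X_opt (I + X_optᴴ R X_opt)⁻¹ X_optᴴ R) = Σ_{t=1}^T ρ λ_t² / (ρ λ_t + 1)`. -/
theorem stmt_1 (Nt T : ℕ) (hNt : 0 < Nt) (hT : 0 < T) (hTN : T ≤ Nt)
    (ρ : ℝ) (hρ : 0 < ρ)
    (U : Matrix (Fin Nt) (Fin Nt) ℂ) (hU1 : Uᴴ * U = 1) (hU2 : U * Uᴴ = 1)
    (lam : Fin Nt → ℝ) (hnn : ∀ t, 0 ≤ lam t) (hmono : Antitone lam)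
    (R : Matrix (Fin Nt) (Fin Nt) ℂ)
    (hR : R = U * Matrix.diagonal (fun t => (lam t : ℂ)) * Uᴴ)
    (htr : R.trace = (Nt : ℂ))
    (Xopt : Matrix (Fin Nt) (Fin T) ℂ)
    (hXopt : Xopt = fun i t => (Real.sqrt ρ : ℂ) * U i (Fin.castLE hTN t)) :
    (1 / (Nt : ℝ)) * (R - R * Xopt * (1 + Xoptᴴ * R * Xopt)⁻¹ * Xoptᴴ * R).trace.re
      = 1 - (1 / (Nt : ℝ)) * ∑ t : Fin T,
          ρ * lam (Fin.castLE hTN t) ^ 2 / (ρ * lam (Fin.castLE hTN t) + 1)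
    ∧ (R * Xopt * (1 + Xoptᴴ * R * Xopt)⁻¹ * Xoptᴴ * R).trace
      = ((∑ t : Fin T,
          ρ * lam (Fin.castLE hTN t) ^ 2 / (ρ * lam (Fin.castLE hTN t) + 1) : ℝ) : ℂ) := by
  set s : ℂ := ((Real.sqrt ρ : ℝ) : ℂ) with hsdef
  have hss : s * s = (ρ : ℂ) := by
    rw [hsdef, ← Complex.ofReal_mul, Real.mul_self_sqrt hρ.le]
  have hstar : star s = s := by
    rw [hsdef, Complex.star_def, Complex.conj_ofReal]
  set c : Fin T → Fin Nt := Fin.castLE hTN with hc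
  have hcinj : Function.Injective c := Fin.castLE_injective hTN
  set lamC : Fin Nt → ℂ := fun t => ((lam t : ℝ) : ℂ) with hlamC
  set L : Matrix (Fin Nt) (Fin Nt) ℂ := Matrix.diagonal lamC with hL
  set E : Matrix (Fin Nt) (Fin T) ℂ := Matrix.of (fun i t => if i = c t then (1:ℂ) else 0)
    with hEdef
  have hmulE : ∀ {m : Type} [Fintype m] (M : Matrix m (Fin Nt) ℂ),
      M * E = M.submatrix id c := by
    intro m _ M
    ext i t
    simp [hEdef, Matrix.mul_apply]
  have hEH : Eᴴ = Matrix.of (fun t i => if i = c t then (1:ℂ) else 0) := by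
    ext t i
    simp only [Matrix.conjTranspose_apply, hEdef, Matrix.of_apply]
    split <;> simp
  have hEmul : ∀ {m : Type} (M : Matrix (Fin Nt) m ℂ),
      Eᴴ * M = M.submatrix c id := by
    intro m M
    ext t j
    simp [hEH, Matrix.mul_apply]
  have hX : Xopt = s • (U * E) := by
    rw [hXopt, hmulE]
    rfl
  have hstarlam : star lamC = lamC := by
    funext t
    simp [hlamC, Complex.star_def, Complex.conj_ofReal]
  have hLh : Lᴴ = L := by
    rw [hL, Matrix.diagonal_conjTranspose, hstarlam]
  have hRh : Rᴴ = R := by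
    rw [hR]
    simp only [Matrix.conjTranspose_mul, Matrix.conjTranspose_conjTranspose]
    rw [show (Matrix.diagonal fun t => ((lam t : ℝ) : ℂ))ᴴ = L from hLh, hL,
      Matrix.mul_assoc]
  have hRX : R * Xopt = s • (U * (L * E)) := by
    rw [hR, hX, Matrix.mul_smul]
    congr 1
    rw [show U * Matrix.diagonal (fun t => ((lam t : ℝ) : ℂ)) = U * L from rfl]
    rw [Matrix.mul_assoc (U * L) Uᴴ (U * E), ← Matrix.mul_assoc Uᴴ U E, hU1,
      Matrix.one_mul, Matrix.mul_assoc]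
  have hXHR : Xoptᴴ * R = s • ((Eᴴ * L) * Uᴴ) := by
    have h0 : Xoptᴴ * R = (Rᴴ * Xopt)ᴴ := by
      rw [Matrix.conjTranspose_mul, Matrix.conjTranspose_conjTranspose]
    rw [h0, hRh, hRX, Matrix.conjTranspose_smul, hstar]
    congr 1
    rw [Matrix.conjTranspose_mul, Matrix.conjTranspose_mul, hLh]
  have hne : ∀ t : Fin T, ((1 : ℂ) + (ρ : ℂ) * lamC (c t)) ≠ 0 := by
    intro t
    have h0 : (0:ℝ) ≤ ρ * lam (c t) := mul_nonneg hρ.le (hnn (c t))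
    have h1 : (0:ℝ) < 1 + ρ * lam (c t) := by linarith
    have h2 : ((1 : ℂ) + (ρ : ℂ) * lamC (c t)) = ((1 + ρ * lam (c t) : ℝ) : ℂ) := by
      push_cast [hlamC]; ring
    rw [h2]
    exact_mod_cast h1.ne'
  have hXHRX : Xoptᴴ * R * Xopt
      = Matrix.diagonal (fun t => (ρ : ℂ) * lamC (c t)) := by
    rw [hXHR, hX, Matrix.smul_mul, Matrix.mul_smul, smul_smul, hss]
    have h2 : Eᴴ * L * Uᴴ * (U * E) = Eᴴ * L * E := by
      rw [Matrix.mul_assoc (Eᴴ * L) Uᴴ (U * E), ← Matrix.mul_assoc Uᴴ U E, hU1,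
        Matrix.one_mul]
    rw [h2, hEmul L, hmulE, Matrix.submatrix_submatrix, Function.comp_id, Function.id_comp,
      hL, Matrix.submatrix_diagonal lamC c hcinj, ← Matrix.diagonal_smul]
    refine congrArg Matrix.diagonal ?_
    funext t
    simp [Function.comp, smul_eq_mul]
  have hD : (1 : Matrix (Fin T) (Fin T) ℂ) + Xoptᴴ * R * Xopt
      = Matrix.diagonal (fun t => ((1 : ℂ) + (ρ : ℂ) * lamC (c t))) := by
    rw [hXHRX, ← Matrix.diagonal_one, Matrix.diagonal_add]
  have hDinv : (1 + Xoptᴴ * R * Xopt)⁻¹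
      = Matrix.diagonal (fun t => ((1 : ℂ) + (ρ : ℂ) * lamC (c t))⁻¹) := by
    rw [hD]
    apply Matrix.inv_eq_right_inv
    rw [Matrix.diagonal_mul_diagonal, ← Matrix.diagonal_one]
    refine congrArg Matrix.diagonal ?_
    funext t
    exact mul_inv_cancel₀ (hne t)
  have hTr : (R * Xopt * (1 + Xoptᴴ * R * Xopt)⁻¹ * Xoptᴴ * R).trace
      = (ρ : ℂ) * ∑ t : Fin T, lamC (c t) ^ 2 * ((1 : ℂ) + (ρ : ℂ) * lamC (c t))⁻¹ := by
    set D : Matrix (Fin T) (Fin T) ℂ :=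
      Matrix.diagonal (fun t => ((1 : ℂ) + (ρ : ℂ) * lamC (c t))⁻¹) with hDdef
    have hre : R * Xopt * (1 + Xoptᴴ * R * Xopt)⁻¹ * Xoptᴴ * R
        = (R * Xopt) * D * (Xoptᴴ * R) := by
      rw [hDinv, Matrix.mul_assoc (R * Xopt * D) Xoptᴴ R]
    rw [hre, hRX, hXHR, Matrix.smul_mul, Matrix.mul_smul, Matrix.smul_mul, smul_smul, hss,
      Matrix.trace_smul]
    rw [smul_eq_mul]
    congr 1
    have h3 : U * (L * E) * D * (Eᴴ * L * Uᴴ)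
        = U * ((L * E) * D * (Eᴴ * L)) * Uᴴ := by
      rw [Matrix.mul_assoc U (L * E) D, ← Matrix.mul_assoc (U * ((L * E) * D)) (Eᴴ * L) Uᴴ,
        Matrix.mul_assoc U ((L * E) * D) (Eᴴ * L)]
    rw [h3, Matrix.trace_mul_cycle, hU1, Matrix.one_mul]
    rw [Matrix.trace_mul_comm ((L * E) * D) (Eᴴ * L), ← Matrix.mul_assoc (Eᴴ * L) (L * E) D]
    have h4 : Eᴴ * L * (L * E) = Matrix.diagonal (fun t => lamC (c t) ^ 2) := by
      rw [Matrix.mul_assoc Eᴴ L (L * E), ← Matrix.mul_assoc L L E, hmulE (L * L),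
        hEmul, Matrix.submatrix_submatrix, Function.comp_id, Function.id_comp, hL,
        Matrix.diagonal_mul_diagonal, Matrix.submatrix_diagonal _ c hcinj]
      refine congrArg Matrix.diagonal ?_
      funext t
      simp [Function.comp, Pi.mul_apply, sq]
    rw [h4, Matrix.diagonal_mul_diagonal, Matrix.trace_diagonal]
  have hS : (ρ : ℂ) * ∑ t : Fin T, lamC (c t) ^ 2 * ((1 : ℂ) + (ρ : ℂ) * lamC (c t))⁻¹
      = ((∑ t : Fin T, ρ * lam (c t) ^ 2 / (ρ * lam (c t) + 1) : ℝ) : ℂ) := by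
    rw [Finset.mul_sum]
    push_cast
    refine Finset.sum_congr rfl fun t _ => ?_
    have h5 : ((1 : ℂ) + (ρ : ℂ) * lamC (c t)) ≠ 0 := hne t
    have h6 : ((ρ * lam (c t) ^ 2 / (ρ * lam (c t) + 1) : ℝ) : ℂ)
        = (ρ : ℂ) * lamC (c t) ^ 2 / ((ρ : ℂ) * lamC (c t) + 1) := by
      push_cast [hlamC]
      ring
    rw [div_eq_mul_inv, add_comm ((ρ : ℂ) * lamC (c t)) 1, mul_assoc]
  have hTrS : (R * Xopt * (1 + Xoptᴴ * R * Xopt)⁻¹ * Xoptᴴ * R).trace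
      = ((∑ t : Fin T, ρ * lam (c t) ^ 2 / (ρ * lam (c t) + 1) : ℝ) : ℂ) :=
    hTr.trans hS
  refine ⟨?_, hTrS⟩
  have hsub : (R - R * Xopt * (1 + Xoptᴴ * R * Xopt)⁻¹ * Xoptᴴ * R).trace
      = (Nt : ℂ) - ((∑ t : Fin T, ρ * lam (c t) ^ 2 / (ρ * lam (c t) + 1) : ℝ) : ℂ) := by
    rw [Matrix.trace_sub, htr, hTrS]
  rw [hsub]
  have hre : ((Nt : ℂ) - ((∑ t : Fin T, ρ * lam (c t) ^ 2 / (ρ * lam (c t) + 1) : ℝ) : ℂ)).re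
      = (Nt : ℝ) - ∑ t : Fin T, ρ * lam (c t) ^ 2 / (ρ * lam (c t) + 1) := by
    rw [Complex.sub_re, Complex.natCast_re, Complex.ofReal_re]
  rw [hre]
  have hNt' : (Nt : ℝ) ≠ 0 := Nat.cast_ne_zero.mpr hNt.ne'
  field_simp
end

section
/- Let R_H and R_L be two N_t × N_t complex Hermitian positive semidefinite matrices with tr(R_H) = tr(R_L) = N_t, with eigenvalues sorted in decreasing order λ^H_1 ≥ ⋯ ≥ λ^H_{N_t} and λ^L_1 ≥ ⋯ ≥ λ^L_{N_t}, such that the eigenvalue vector of R_H majorizes that of R_L (i.e., Σ_{t=1}^{k} λ^H_t ≥ Σ_{t=1}^{k} λ^L_t for all 1 ≤ k ≤ N_t, with equality at k = N_t). Let X_H = √ρ · U_{H,[1:T]} and X_L = √ρ · U_{L,[1:T]} be the optimal training matrices built from the first T eigenvectors of R_H and R_L respectively. Then MSE_{R_H}(X_H) ≤ MSE_{R_L}(X_L); equivalently, Σ_{t=1}^{T} ρ (λ^H_t)² / (ρ λ^H_t + 1) ≥ Σ_{t=1}^{T} ρ (λ^L_t)² / (ρ λ^L_t + 1). -/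
/-!
With `X = √ρ • U[:, 1:T]` everything diagonalises in the eigenbasis of `R`: `Xᴴ R X` is
`ρ • diag(λ₁, …, λ_T)`, so `N_t • MSE_R(X) = tr R - ∑_{t ≤ T} ρ λ_t² / (ρ λ_t + 1)`.
Since both traces equal `N_t`, everything reduces to comparing the two gains.

For `φ x = ρ x² / (ρ x + 1)` one has `φ a - φ b = s(a, b) (a - b)` with
`s(a, b) = 1 - 1 / ((ρ a + 1) (ρ b + 1))`, which is nonnegative and monotone in both
arguments on `[0, ∞)`. Hence `∑_{t ≤ T} (φ λ^H_t - φ λ^L_t) = ∑ s_t d_t` with `s_t`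
nonnegative and decreasing and `d_t = λ^H_t - λ^L_t` having nonnegative partial sums by
majorization, and Abel summation shows this is nonnegative.
-/

open Matrix Finset

namespace Fin

theorem sum_filter_val_lt_succ {M : Type*} [AddCommMonoid M] {N k : ℕ} (hk : k < N)
    (f : Fin N → M) :
    ∑ t ∈ univ.filter (fun t : Fin N => (t : ℕ) < k + 1), f t
      = ∑ t ∈ univ.filter (fun t : Fin N => (t : ℕ) < k), f t + f ⟨k, hk⟩ := by
  have : univ.filter (fun t : Fin N => (t : ℕ) < k + 1)
      = insert ⟨k, hk⟩ (univ.filter (fun t : Fin N => (t : ℕ) < k)) := by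
    ext t
    simp only [Order.lt_add_one_iff, mem_filter, mem_univ, true_and, mem_insert, Fin.ext_iff]
    omega
  rw [this, sum_insert (by simp), add_comm]

theorem sum_castLE_eq_sum_filter_val_lt {M : Type*} [AddCommMonoid M] {T N : ℕ} (h : T ≤ N)
    (f : Fin N → M) :
    ∑ t : Fin T, f (Fin.castLE h t) = ∑ t ∈ univ.filter (fun t : Fin N => (t : ℕ) < T), f t := by
  change ∑ t : Fin T, f (Fin.castLEEmb h t) = _
  rw [← sum_map univ (Fin.castLEEmb h)]
  congr 1
  ext t
  simp only [mem_map, mem_univ, true_and, mem_filter]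
  exact ⟨fun ⟨s, hs⟩ => hs ▸ s.isLt, fun ht => ⟨⟨t, ht⟩, rfl⟩⟩

/-- Abel summation; the lower bound `c` of `s` on the first `T` indices is kept free so that the
induction can use `s ⟨T, _⟩` as the bound for the shorter sum. -/
theorem mul_sum_filter_val_lt_le_sum_mul {R : Type*} [Semiring R] [PartialOrder R]
    [IsOrderedRing R] {N T : ℕ} {s d : Fin N → R} {c : R} (hs : Antitone s) (hT : T ≤ N)
    (hc : ∀ t : Fin N, (t : ℕ) < T → c ≤ s t)
    (hd : ∀ k ≤ T, 0 ≤ ∑ t ∈ univ.filter (fun t : Fin N => (t : ℕ) < k), d t) :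
    c * ∑ t ∈ univ.filter (fun t : Fin N => (t : ℕ) < T), d t
      ≤ ∑ t ∈ univ.filter (fun t : Fin N => (t : ℕ) < T), s t * d t := by
  induction T generalizing c with
  | zero => simp
  | succ T ih =>
    set u : Fin N := ⟨T, hT⟩
    have hprefix := ih (c := s u) (Nat.le_of_succ_le hT) (fun t ht => hs (Fin.le_def.mpr ht.le))
      (fun k hk => hd k (hk.trans T.le_succ))
    rw [sum_filter_val_lt_succ hT, sum_filter_val_lt_succ hT]
    calc c * (∑ t ∈ univ.filter (fun t : Fin N => (t : ℕ) < T), d t + d u)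
        ≤ s u * (∑ t ∈ univ.filter (fun t : Fin N => (t : ℕ) < T), d t + d u) := by
          gcongr
          · exact (sum_filter_val_lt_succ hT d) ▸ hd (T + 1) le_rfl
          · exact hc u (Nat.lt_succ_self T)
      _ ≤ _ := by rw [mul_add]; exact add_le_add_left hprefix _

end Fin

theorem mul_sq_div_sub_mul_sq_div {ρ a b : ℝ} (ha : ρ * a + 1 ≠ 0) (hb : ρ * b + 1 ≠ 0) :
    ρ * a ^ 2 / (ρ * a + 1) - ρ * b ^ 2 / (ρ * b + 1)
      = (1 - ((ρ * a + 1) * (ρ * b + 1))⁻¹) * (a - b) := by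
  field_simp
  ring

theorem one_sub_inv_mul_le_one_sub_inv_mul {ρ a b a' b' : ℝ} (hρ : 0 ≤ ρ) (ha' : 0 ≤ a')
    (hb' : 0 ≤ b') (ha : a' ≤ a) (hb : b' ≤ b) :
    1 - ((ρ * a' + 1) * (ρ * b' + 1))⁻¹ ≤ 1 - ((ρ * a + 1) * (ρ * b + 1))⁻¹ := by
  have : 0 ≤ a := ha'.trans ha
  gcongr

theorem sum_filter_val_lt_mul_sq_div_le {N T : ℕ} (hT : T ≤ N) {ρ : ℝ} (hρ : 0 ≤ ρ)
    {a b : Fin N → ℝ} (ha : Antitone a) (hb : Antitone b) (ha₀ : ∀ t, 0 ≤ a t)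
    (hb₀ : ∀ t, 0 ≤ b t)
    (hab : ∀ k ≤ T, ∑ t ∈ univ.filter (fun t : Fin N => (t : ℕ) < k), b t
      ≤ ∑ t ∈ univ.filter (fun t : Fin N => (t : ℕ) < k), a t) :
    ∑ t ∈ univ.filter (fun t : Fin N => (t : ℕ) < T), ρ * b t ^ 2 / (ρ * b t + 1)
      ≤ ∑ t ∈ univ.filter (fun t : Fin N => (t : ℕ) < T), ρ * a t ^ 2 / (ρ * a t + 1) := by
  set s : Fin N → ℝ := fun t => 1 - ((ρ * a t + 1) * (ρ * b t + 1))⁻¹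
  have hs : Antitone s := fun i j hij =>
    one_sub_inv_mul_le_one_sub_inv_mul hρ (ha₀ j) (hb₀ j) (ha hij) (hb hij)
  have hs₀ : ∀ t, 0 ≤ s t := fun t => by
    simpa [s] using one_sub_inv_mul_le_one_sub_inv_mul hρ le_rfl le_rfl (ha₀ t) (hb₀ t)
  rw [← sub_nonneg, ← sum_sub_distrib, sum_congr rfl fun t _ =>
    mul_sq_div_sub_mul_sq_div (by nlinarith [ha₀ t]) (by nlinarith [hb₀ t])]
  simpa only [zero_mul] using Fin.mul_sum_filter_val_lt_le_sum_mul (d := fun t => a t - b t)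
    (c := 0) hs hT (fun t _ => hs₀ t)
    (fun k hk => by rw [sum_sub_distrib, sub_nonneg]; exact hab k hk)

theorem conjTranspose_submatrix_mul_mul_submatrix {α l n : Type*} [Fintype n] [DecidableEq n]
    [Semiring α] [Star α] {U : Matrix n n α} (hU : Uᴴ * U = 1)
    (A : Matrix n n α) (e : l → n) :
    (U.submatrix id e)ᴴ * (U * A * Uᴴ) * U.submatrix id e = A.submatrix e e := by
  have hsub : ∀ B : Matrix n n α,
      (Uᴴ * B * U).submatrix e e = Uᴴ.submatrix e id * B * U.submatrix id e := by
    intro B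
    rw [submatrix_mul _ _ _ id _ Function.bijective_id,
      submatrix_mul _ _ _ id _ Function.bijective_id, submatrix_id_id]
  rw [conjTranspose_submatrix, ← hsub, ← Matrix.mul_assoc, ← Matrix.mul_assoc, hU,
    Matrix.one_mul, Matrix.mul_assoc, hU, Matrix.mul_one]

theorem trace_sub_mul_inv_mul_of_eigenbasis {n m : Type*} [Fintype n] [DecidableEq n]
    [Fintype m] [DecidableEq m] {U : Matrix n n ℂ} (hU : Uᴴ * U = 1)
    {lam : n → ℝ} (hlam : ∀ i, 0 ≤ lam i) {ρ : ℝ} (hρ : 0 ≤ ρ) {e : m → n}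
    (he : Function.Injective e) {R : Matrix n n ℂ}
    (hR : R = U * diagonal (fun i => (lam i : ℂ)) * Uᴴ) {X : Matrix n m ℂ}
    (hX : X = (√ρ : ℂ) • U.submatrix id e) :
    (R - R * X * (1 + Xᴴ * R * X)⁻¹ * Xᴴ * R).trace
      = ((∑ i, lam i - ∑ t, ρ * lam (e t) ^ 2 / (ρ * lam (e t) + 1) : ℝ) : ℂ) := by
  have hsandwich : ∀ A : Matrix n n ℂ, Xᴴ * (U * A * Uᴴ) * X = (ρ : ℂ) • A.submatrix e e := by
    intro A
    rw [hX, conjTranspose_smul, Matrix.smul_mul, Matrix.mul_smul, Matrix.smul_mul, smul_smul,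
      conjTranspose_submatrix_mul_mul_submatrix hU, RCLike.star_def, Complex.conj_ofReal,
      ← Complex.ofReal_mul, Real.mul_self_sqrt hρ]
  have hRR : R * R = U * diagonal (fun i => ((lam i ^ 2 : ℝ) : ℂ)) * Uᴴ := by
    simp only [hR, Matrix.mul_assoc]
    rw [← Matrix.mul_assoc Uᴴ U, hU, Matrix.one_mul, ← Matrix.mul_assoc _ _ Uᴴ,
      diagonal_mul_diagonal]
    congr 3
    ext i
    push_cast
    ring
  have hgram : 1 + Xᴴ * R * X = diagonal (fun t => ((ρ * lam (e t) + 1 : ℝ) : ℂ)) := by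
    rw [hR, hsandwich, submatrix_diagonal _ _ he, ← diagonal_one, ← diagonal_smul, diagonal_add]
    congr 1
    ext t
    simp only [Pi.smul_apply, Function.comp_apply, smul_eq_mul]
    push_cast
    ring
  have hinv : (1 + Xᴴ * R * X)⁻¹ = diagonal (fun t => ((ρ * lam (e t) + 1 : ℝ) : ℂ)⁻¹) := by
    refine inv_eq_left_inv ?_
    rw [hgram, diagonal_mul_diagonal, ← diagonal_one]
    congr 1
    ext t
    exact inv_mul_cancel₀ (Complex.ofReal_ne_zero.mpr (by nlinarith [hlam (e t)]))
  calc (R - R * X * (1 + Xᴴ * R * X)⁻¹ * Xᴴ * R).trace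
      = R.trace - (Xᴴ * (R * R) * X * (1 + Xᴴ * R * X)⁻¹).trace := by
        rw [trace_sub, trace_mul_cycle, trace_mul_comm]
        simp only [Matrix.mul_assoc]
    _ = _ := by
        rw [hRR, hsandwich, submatrix_diagonal _ _ he, hinv, smul_mul, diagonal_mul_diagonal,
          trace_smul, trace_diagonal, hR, trace_mul_cycle, hU, Matrix.one_mul, trace_diagonal]
        push_cast
        rw [smul_eq_mul, mul_sum]
        congr 1
        refine sum_congr rfl fun t _ => ?_
        simp only [Function.comp_apply]
        ring

theorem stmt_2_general (Nt T : ℕ) (hTN : T ≤ Nt)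
    (ρ : ℝ) (hρ : 0 < ρ)
    (UH UL : Matrix (Fin Nt) (Fin Nt) ℂ)
    (hUH1 : UHᴴ * UH = 1)
    (hUL1 : ULᴴ * UL = 1)
    (lamH lamL : Fin Nt → ℝ)
    (hHnn : ∀ t, 0 ≤ lamH t) (hLnn : ∀ t, 0 ≤ lamL t)
    (hHmono : Antitone lamH) (hLmono : Antitone lamL)
    (RH RL : Matrix (Fin Nt) (Fin Nt) ℂ)
    (hRH : RH = UH * Matrix.diagonal (fun t => (lamH t : ℂ)) * UHᴴ)
    (hRL : RL = UL * Matrix.diagonal (fun t => (lamL t : ℂ)) * ULᴴ)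
    (htrH : ∑ t : Fin Nt, lamH t = (Nt : ℝ))
    (htrL : ∑ t : Fin Nt, lamL t = (Nt : ℝ))
    (hmaj : ∀ k : ℕ, k ≤ Nt →
      ∑ t ∈ Finset.univ.filter (fun t : Fin Nt => (t : ℕ) < k), lamL t
        ≤ ∑ t ∈ Finset.univ.filter (fun t : Fin Nt => (t : ℕ) < k), lamH t)
    (XH XL : Matrix (Fin Nt) (Fin T) ℂ)
    (hXH : XH = fun i t => (Real.sqrt ρ : ℂ) * UH i (Fin.castLE hTN t))
    (hXL : XL = fun i t => (Real.sqrt ρ : ℂ) * UL i (Fin.castLE hTN t)) :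
    (1 / (Nt : ℝ)) * (RH - RH * XH * (1 + XHᴴ * RH * XH)⁻¹ * XHᴴ * RH).trace.re
      ≤ (1 / (Nt : ℝ)) * (RL - RL * XL * (1 + XLᴴ * RL * XL)⁻¹ * XLᴴ * RL).trace.re
    ∧ ∑ t : Fin T, ρ * lamL (Fin.castLE hTN t) ^ 2 / (ρ * lamL (Fin.castLE hTN t) + 1)
      ≤ ∑ t : Fin T, ρ * lamH (Fin.castLE hTN t) ^ 2 / (ρ * lamH (Fin.castLE hTN t) + 1) := by
  have hgain : ∑ t : Fin T, ρ * lamL (Fin.castLE hTN t) ^ 2 / (ρ * lamL (Fin.castLE hTN t) + 1)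
      ≤ ∑ t : Fin T, ρ * lamH (Fin.castLE hTN t) ^ 2 / (ρ * lamH (Fin.castLE hTN t) + 1) := by
    rw [Fin.sum_castLE_eq_sum_filter_val_lt hTN (fun t => ρ * lamL t ^ 2 / (ρ * lamL t + 1)),
      Fin.sum_castLE_eq_sum_filter_val_lt hTN (fun t => ρ * lamH t ^ 2 / (ρ * lamH t + 1))]
    exact sum_filter_val_lt_mul_sq_div_le hTN hρ.le hHmono hLmono hHnn hLnn
      fun k hk => hmaj k (hk.trans hTN)
  refine ⟨?_, hgain⟩
  rw [trace_sub_mul_inv_mul_of_eigenbasis hUH1 hHnn hρ.le (Fin.castLE_injective hTN) hRH hXH,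
    trace_sub_mul_inv_mul_of_eigenbasis hUL1 hLnn hρ.le (Fin.castLE_injective hTN) hRL hXL,
    Complex.ofReal_re, Complex.ofReal_re, htrH, htrL]
  gcongr

/-- Lemma 2: if the decreasing eigenvalue vector of `R_H` majorizes that of
`R_L` (both with trace `N_t`), then the optimal-training MSE under `R_H` is at most that
under `R_L`; equivalently the corresponding eigenvalue sums are ordered. -/
theorem stmt_2 (Nt T : ℕ) (hNt : 0 < Nt) (hT : 0 < T) (hTN : T ≤ Nt)
    (ρ : ℝ) (hρ : 0 < ρ)
    (UH UL : Matrix (Fin Nt) (Fin Nt) ℂ)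
    (hUH1 : UHᴴ * UH = 1) (hUH2 : UH * UHᴴ = 1)
    (hUL1 : ULᴴ * UL = 1) (hUL2 : UL * ULᴴ = 1)
    (lamH lamL : Fin Nt → ℝ)
    (hHnn : ∀ t, 0 ≤ lamH t) (hLnn : ∀ t, 0 ≤ lamL t)
    (hHmono : Antitone lamH) (hLmono : Antitone lamL)
    (RH RL : Matrix (Fin Nt) (Fin Nt) ℂ)
    (hRH : RH = UH * Matrix.diagonal (fun t => (lamH t : ℂ)) * UHᴴ)
    (hRL : RL = UL * Matrix.diagonal (fun t => (lamL t : ℂ)) * ULᴴ)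
    (htrH : ∑ t : Fin Nt, lamH t = (Nt : ℝ))
    (htrL : ∑ t : Fin Nt, lamL t = (Nt : ℝ))
    (hmaj : ∀ k : ℕ, k ≤ Nt →
      ∑ t ∈ Finset.univ.filter (fun t : Fin Nt => (t : ℕ) < k), lamL t
        ≤ ∑ t ∈ Finset.univ.filter (fun t : Fin Nt => (t : ℕ) < k), lamH t)
    (XH XL : Matrix (Fin Nt) (Fin T) ℂ)
    (hXH : XH = fun i t => (Real.sqrt ρ : ℂ) * UH i (Fin.castLE hTN t))
    (hXL : XL = fun i t => (Real.sqrt ρ : ℂ) * UL i (Fin.castLE hTN t)) :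
    (1 / (Nt : ℝ)) * (RH - RH * XH * (1 + XHᴴ * RH * XH)⁻¹ * XHᴴ * RH).trace.re
      ≤ (1 / (Nt : ℝ)) * (RL - RL * XL * (1 + XLᴴ * RL * XL)⁻¹ * XLᴴ * RL).trace.re
    ∧ ∑ t : Fin T, ρ * lamL (Fin.castLE hTN t) ^ 2 / (ρ * lamL (Fin.castLE hTN t) + 1)
      ≤ ∑ t : Fin T, ρ * lamH (Fin.castLE hTN t) ^ 2 / (ρ * lamH (Fin.castLE hTN t) + 1) :=
  stmt_2_general Nt T hTN ρ hρ UH UL hUH1 hUL1 lamH lamL hHnn hLnn hHmono hLmono RH RL hRH hRL htrH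
    htrL hmaj XH XL hXH hXL
end

section
/- (Deterministic core of Lemma 3) Let X_opt = √ρ · U_{[1:T]}, let R_ĥ = R X_opt (I_T + X_opt^H R X_opt)^{-1} X_opt^H R be the estimate covariance, and let R_r = R − R_ĥ be the error covariance. Then tr(R_ĥ) = Σ_{t=1}^{T} ρ λ_t² / (ρ λ_t + 1), and for every nonzero vector v ∈ ℂ^{N_t}, tr(R_ĥ) + (v^H R_r v) / ‖v‖² ≤ Σ_{t=1}^{T} ρ λ_t² / (ρ λ_t + 1) + λ_1. -/
open Matrix BigOperators

private lemma sel_diag_sel {Nt T : ℕ} (hTN : T ≤ Nt) (d : Fin T → ℂ) :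
    ((1 : Matrix (Fin Nt) (Fin Nt) ℂ).submatrix (Equiv.refl (Fin Nt)) (Fin.castLE hTN)) *
      Matrix.diagonal d *
      ((1 : Matrix (Fin Nt) (Fin Nt) ℂ).submatrix (Equiv.refl (Fin Nt)) (Fin.castLE hTN))ᴴ
    = Matrix.diagonal (fun i : Fin Nt => if h : (i : ℕ) < T then d ⟨i, h⟩ else 0) := by
  ext i j
  rw [Matrix.mul_apply]
  simp only [Matrix.mul_diagonal, Matrix.conjTranspose_apply, Matrix.submatrix_apply,
    Matrix.one_apply, Equiv.refl_apply, id_eq]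
  by_cases hij : i = j
  · subst hij
    by_cases h : (i : ℕ) < T
    · have he : ∀ t : Fin T, (i = Fin.castLE hTN t) ↔ (t = ⟨(i : ℕ), h⟩) := by
        intro t
        constructor
        · intro ht; exact Fin.ext (by simpa using congrArg Fin.val ht.symm)
        · intro ht; subst ht; exact Fin.ext rfl
      simp [he, Matrix.diagonal_apply_eq, h]
    · have he : ∀ t : Fin T, ¬ (i = Fin.castLE hTN t) := by
        intro t ht
        exact h (by rw [ht]; exact t.isLt)
      simp [he, Matrix.diagonal_apply_eq, h]
  · rw [Matrix.diagonal_apply_ne _ hij]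
    apply Finset.sum_eq_zero
    intro t _
    by_cases h1 : i = Fin.castLE hTN t
    · by_cases h2 : j = Fin.castLE hTN t
      · exact absurd (h1.trans h2.symm) hij
      · simp [h2]
    · simp [h1]

set_option maxHeartbeats 1000000 in
/-- deterministic core of Lemma 3: with `X_opt = √ρ U_{[1:T]}`,
`R_ĥ = R X_opt (I + X_optᴴ R X_opt)⁻¹ X_optᴴ R` and `R_r = R − R_ĥ`, one has
`tr(R_ĥ) = Σ_{t=1}^T ρ λ_t²/(ρ λ_t + 1)`, and for every nonzero `v`,
`tr(R_ĥ) + (vᴴ R_r v)/‖v‖² ≤ Σ_{t=1}^T ρ λ_t²/(ρ λ_t + 1) + λ_1`. -/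
theorem stmt_5 (Nt T : ℕ) (hNt : 0 < Nt) (hT : 0 < T) (hTN : T ≤ Nt)
    (ρ : ℝ) (hρ : 0 < ρ)
    (U : Matrix (Fin Nt) (Fin Nt) ℂ) (hU1 : Uᴴ * U = 1) (hU2 : U * Uᴴ = 1)
    (lam : Fin Nt → ℝ) (hnn : ∀ t, 0 ≤ lam t) (hmono : Antitone lam)
    (R : Matrix (Fin Nt) (Fin Nt) ℂ)
    (hR : R = U * Matrix.diagonal (fun t => (lam t : ℂ)) * Uᴴ)
    (Xopt : Matrix (Fin Nt) (Fin T) ℂ)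
    (hXopt : Xopt = fun i t => (Real.sqrt ρ : ℂ) * U i (Fin.castLE hTN t))
    (Rh Rr : Matrix (Fin Nt) (Fin Nt) ℂ)
    (hRh : Rh = R * Xopt * (1 + Xoptᴴ * R * Xopt)⁻¹ * Xoptᴴ * R)
    (hRr : Rr = R - Rh) :
    Rh.trace = ((∑ t : Fin T,
        ρ * lam (Fin.castLE hTN t) ^ 2 / (ρ * lam (Fin.castLE hTN t) + 1) : ℝ) : ℂ)
    ∧ ∀ v : Fin Nt → ℂ, v ≠ 0 →
        Rh.trace.re + (star v ⬝ᵥ Rr.mulVec v).re / (star v ⬝ᵥ v).re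
          ≤ (∑ t : Fin T,
              ρ * lam (Fin.castLE hTN t) ^ 2 / (ρ * lam (Fin.castLE hTN t) + 1))
            + lam ⟨0, hNt⟩ := by
  classical
  have hcinj : Function.Injective (Fin.castLE hTN) := fun a b h =>
    Fin.ext (by simpa using congrArg Fin.val h)
  -- abbreviations as plain terms
  have hsρ : ((Real.sqrt ρ : ℝ) : ℂ) * ((Real.sqrt ρ : ℝ) : ℂ) = (ρ : ℂ) := by
    rw [← Complex.ofReal_mul, Real.mul_self_sqrt hρ.le]
  set E : Matrix (Fin Nt) (Fin T) ℂ :=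
    (1 : Matrix (Fin Nt) (Fin Nt) ℂ).submatrix (Equiv.refl (Fin Nt)) (Fin.castLE hTN) with hE
  set Λ : Matrix (Fin Nt) (Fin Nt) ℂ := Matrix.diagonal (fun t => (lam t : ℂ)) with hΛ
  -- basic selector facts
  have hmulE : ∀ {k : ℕ} (M : Matrix (Fin k) (Fin Nt) ℂ),
      M * E = M.submatrix id (Fin.castLE hTN) := by
    intro k M
    rw [hE, Matrix.mul_submatrix_one]
    rfl
  have hEH : Eᴴ = (1 : Matrix (Fin Nt) (Fin Nt) ℂ).submatrix (Fin.castLE hTN)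
      (Equiv.refl (Fin Nt)) := by
    rw [hE, Matrix.conjTranspose_submatrix, Matrix.conjTranspose_one]
  have hEHmul : ∀ {k : ℕ} (M : Matrix (Fin Nt) (Fin k) ℂ),
      Eᴴ * M = M.submatrix (Fin.castLE hTN) id := by
    intro k M
    rw [hEH, Matrix.one_submatrix_mul]
    rfl
  have hX : Xopt = ((Real.sqrt ρ : ℝ) : ℂ) • (U * E) := by
    rw [hmulE U, hXopt]
    ext i t
    simp [Matrix.smul_apply]
  have hXH : Xoptᴴ = ((Real.sqrt ρ : ℝ) : ℂ) • (Eᴴ * Uᴴ) := by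
    rw [hX, Matrix.conjTranspose_smul, Matrix.conjTranspose_mul]
    congr 1
    simp [Complex.star_def, Complex.conj_ofReal]
  -- the Gram matrix
  have hmid : Eᴴ * Uᴴ * (U * Λ * Uᴴ) * (U * E)
      = Matrix.diagonal (fun t : Fin T => (lam (Fin.castLE hTN t) : ℂ)) := by
    have h1 : Eᴴ * Uᴴ * (U * Λ * Uᴴ) * (U * E) = Eᴴ * (Uᴴ * U * Λ * (Uᴴ * U)) * E := by
      simp only [Matrix.mul_assoc]
    rw [h1, hU1, Matrix.one_mul, Matrix.mul_one, hEHmul, hmulE,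
      Matrix.submatrix_submatrix, Function.comp_id, Function.id_comp, hΛ,
      Matrix.submatrix_diagonal _ _ hcinj]
    simp [Function.comp]
  have hA : Xoptᴴ * R * Xopt
      = Matrix.diagonal (fun t : Fin T => ((ρ * lam (Fin.castLE hTN t) : ℝ) : ℂ)) := by
    rw [hXH, hX, hR, Matrix.smul_mul, Matrix.smul_mul, Matrix.mul_smul, smul_smul, hsρ, hmid]
    ext i j
    by_cases h : i = j
    · subst h
      simp only [Matrix.smul_apply, Matrix.diagonal_apply_eq, smul_eq_mul]
      push_cast
      ring
    · simp [Matrix.diagonal_apply_ne _ h]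
  -- inverse
  have hpos : ∀ t : Fin T, (0 : ℝ) < ρ * lam (Fin.castLE hTN t) + 1 := by
    intro t
    have := hnn (Fin.castLE hTN t)
    nlinarith
  have hInv : (1 + Xoptᴴ * R * Xopt)⁻¹
      = Matrix.diagonal (fun t : Fin T => (((ρ * lam (Fin.castLE hTN t) + 1 : ℝ)) : ℂ)⁻¹) := by
    apply Matrix.inv_eq_right_inv
    rw [hA, Matrix.add_mul, Matrix.one_mul, Matrix.diagonal_mul_diagonal]
    ext i j
    rcases eq_or_ne i j with rfl | h
    · simp only [Matrix.add_apply, Matrix.diagonal_apply_eq, Matrix.one_apply_eq]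
      have h0 : (1 + (ρ : ℂ) * ((lam (Fin.castLE hTN i) : ℝ) : ℂ)) ≠ 0 := by
        rw [show (1 : ℂ) + (ρ : ℂ) * ((lam (Fin.castLE hTN i) : ℝ) : ℂ)
            = (((ρ * lam (Fin.castLE hTN i) + 1 : ℝ)) : ℂ) by push_cast; ring]
        exact Complex.ofReal_ne_zero.mpr (hpos i).ne'
      push_cast
      set x : ℂ := (ρ : ℂ) * ((lam (Fin.castLE hTN i) : ℝ) : ℂ) with hx
      have h0' : x + 1 ≠ 0 := by rwa [add_comm] at h0
      rw [show (x + 1)⁻¹ + x * (x + 1)⁻¹ = (x + 1) * (x + 1)⁻¹ from by ring,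
        mul_inv_cancel₀ h0']
    · simp [Matrix.diagonal_apply_ne _ h, Matrix.one_apply_ne h]
  -- the two outer products
  have hRX : R * Xopt = ((Real.sqrt ρ : ℝ) : ℂ) • (U * (Λ * E)) := by
    rw [hR, hX, Matrix.mul_smul]
    congr 1
    have h1 : Uᴴ * (U * E) = E := by rw [← Matrix.mul_assoc, hU1, Matrix.one_mul]
    simp only [Matrix.mul_assoc, h1]
  have hXR : Xoptᴴ * R = ((Real.sqrt ρ : ℝ) : ℂ) • ((Eᴴ * Λ) * Uᴴ) := by
    rw [hXH, hR, Matrix.smul_mul]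
    congr 1
    have h1 : Uᴴ * (U * (Λ * Uᴴ)) = Λ * Uᴴ := by rw [← Matrix.mul_assoc, hU1, Matrix.one_mul]
    simp only [Matrix.mul_assoc, h1]
  -- the middle diagonal matrix
  have hmid2 : (Λ * E) * Matrix.diagonal
        (fun t : Fin T => (((ρ * lam (Fin.castLE hTN t) + 1 : ℝ)) : ℂ)⁻¹) * (Eᴴ * Λ)
      = Matrix.diagonal (fun i : Fin Nt => (lam i : ℂ) *
          (if h : (i : ℕ) < T then (((ρ * lam i + 1 : ℝ)) : ℂ)⁻¹ else 0) * (lam i : ℂ)) := by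
    have h1 : (Λ * E) * Matrix.diagonal
          (fun t : Fin T => (((ρ * lam (Fin.castLE hTN t) + 1 : ℝ)) : ℂ)⁻¹) * (Eᴴ * Λ)
        = Λ * (E * Matrix.diagonal
          (fun t : Fin T => (((ρ * lam (Fin.castLE hTN t) + 1 : ℝ)) : ℂ)⁻¹) * Eᴴ) * Λ := by
      simp only [Matrix.mul_assoc]
    rw [h1, hE, sel_diag_sel hTN, hΛ, Matrix.diagonal_mul_diagonal, Matrix.diagonal_mul_diagonal]
    refine congrArg Matrix.diagonal (funext fun i => ?_)
    by_cases h : (i : ℕ) < T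
    · rw [dif_pos h, dif_pos h, show Fin.castLE hTN ⟨(i : ℕ), h⟩ = i from Fin.ext rfl]
    · rw [dif_neg h, dif_neg h]
  -- the diagonal form of Rh
  set m : Fin Nt → ℝ :=
    fun i => if (i : ℕ) < T then ρ * lam i ^ 2 / (ρ * lam i + 1) else 0 with hm
  have hRhD : Rh = U * Matrix.diagonal (fun i => (m i : ℂ)) * Uᴴ := by
    rw [hRh, Matrix.mul_assoc (R * Xopt * (1 + Xoptᴴ * R * Xopt)⁻¹) Xoptᴴ R, hInv, hRX, hXR,
      Matrix.smul_mul, Matrix.smul_mul, Matrix.mul_smul, smul_smul, hsρ]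
    have h2 : U * (Λ * E) * Matrix.diagonal
          (fun t : Fin T => (((ρ * lam (Fin.castLE hTN t) + 1 : ℝ)) : ℂ)⁻¹) * (Eᴴ * Λ * Uᴴ)
        = U * ((Λ * E) * Matrix.diagonal
          (fun t : Fin T => (((ρ * lam (Fin.castLE hTN t) + 1 : ℝ)) : ℂ)⁻¹) * (Eᴴ * Λ)) * Uᴴ := by
      simp only [Matrix.mul_assoc]
    rw [h2, hmid2]
    have hsmul : ((ρ : ℝ) : ℂ) • Matrix.diagonal (fun i : Fin Nt => (lam i : ℂ) *
          (if h : (i : ℕ) < T then (((ρ * lam i + 1 : ℝ)) : ℂ)⁻¹ else 0) * (lam i : ℂ))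
        = Matrix.diagonal (fun i => (m i : ℂ)) := by
      ext i j
      rcases eq_or_ne i j with rfl | h
      · simp only [Matrix.smul_apply, Matrix.diagonal_apply_eq, smul_eq_mul, hm]
        by_cases h : (i : ℕ) < T
        · have h0 : (ρ * lam i + 1 : ℝ) ≠ 0 := by nlinarith [hnn i]
          rw [dif_pos h, if_pos h]
          push_cast
          field_simp
        · rw [dif_neg h, if_neg h]
          simp
      · simp [Matrix.diagonal_apply_ne _ h]
    rw [← hsmul, Matrix.mul_smul, Matrix.smul_mul]
  -- diagonal form of Rr
  have hRrD : Rr = U * Matrix.diagonal (fun i => ((lam i - m i : ℝ) : ℂ)) * Uᴴ := by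
    rw [hRr, hR, hRhD, ← Matrix.sub_mul, ← Matrix.mul_sub]
    have : Λ - Matrix.diagonal (fun i => (m i : ℂ))
        = Matrix.diagonal (fun i => ((lam i - m i : ℝ) : ℂ)) := by
      rw [hΛ, Matrix.diagonal_sub]
      congr 1
      funext i
      push_cast
      ring
    rw [this]
  -- trace computation
  have hsum : ∑ i : Fin Nt, m i
      = ∑ t : Fin T, ρ * lam (Fin.castLE hTN t) ^ 2 / (ρ * lam (Fin.castLE hTN t) + 1) := by
    have h1 : ∑ t : Fin T, ρ * lam (Fin.castLE hTN t) ^ 2 / (ρ * lam (Fin.castLE hTN t) + 1)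
        = ∑ t : Fin T, m (Fin.castLE hTN t) := by
      refine Finset.sum_congr rfl fun t _ => ?_
      rw [hm]
      simp only
      rw [if_pos]
      exact t.isLt
    have h2 : (∑ t : Fin T, m (Fin.castLE hTN t))
        = ∑ i ∈ Finset.univ.map ⟨Fin.castLE hTN, hcinj⟩, m i :=
      (Finset.sum_map Finset.univ ⟨Fin.castLE hTN, hcinj⟩ m).symm
    rw [h1, h2]
    refine (Finset.sum_subset (Finset.subset_univ _) ?_).symm
    intro i _ hi
    simp only [Finset.mem_map, Finset.mem_univ, true_and, Function.Embedding.coeFn_mk] at hi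
    have hiT : ¬ (i : ℕ) < T := by
      intro h
      exact hi ⟨⟨(i : ℕ), h⟩, Fin.ext rfl⟩
    rw [hm]
    simp only
    rw [if_neg hiT]
  have htr : Rh.trace = ((∑ t : Fin T,
      ρ * lam (Fin.castLE hTN t) ^ 2 / (ρ * lam (Fin.castLE hTN t) + 1) : ℝ) : ℂ) := by
    rw [hRhD, Matrix.trace_mul_cycle, hU1, Matrix.one_mul,
      Matrix.trace_diagonal, ← hsum, Complex.ofReal_sum]
  refine ⟨htr, ?_⟩
  intro v hv
  set w : Fin Nt → ℂ := Uᴴ.mulVec v with hw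
  have hwv : U.mulVec w = v := by
    rw [hw, Matrix.mulVec_mulVec, hU2, Matrix.one_mulVec]
  have hdot : ∀ x : Fin Nt → ℂ, star v ⬝ᵥ U.mulVec x = star w ⬝ᵥ x := by
    intro x
    rw [Matrix.dotProduct_mulVec]
    congr 1
    rw [hw, Matrix.star_mulVec, Matrix.conjTranspose_conjTranspose]
  have hterm : ∀ z : ℂ, ∀ r : ℝ, star z * ((r : ℂ) * z) = ((r * Complex.normSq z : ℝ) : ℂ) := by
    intro z r
    push_cast
    rw [Complex.normSq_eq_conj_mul_self]
    rw [Complex.star_def]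
    ring
  have h2 : star v ⬝ᵥ Rr.mulVec v
      = ((∑ i : Fin Nt, (lam i - m i) * Complex.normSq (w i) : ℝ) : ℂ) := by
    rw [hRrD, ← Matrix.mulVec_mulVec, ← Matrix.mulVec_mulVec, hdot, ← hw]
    simp only [dotProduct, Pi.star_apply, Matrix.mulVec_diagonal]
    rw [Complex.ofReal_sum]
    refine Finset.sum_congr rfl fun i _ => ?_
    exact hterm (w i) (lam i - m i)
  have h3 : star v ⬝ᵥ v = ((∑ i : Fin Nt, Complex.normSq (w i) : ℝ) : ℂ) := by
    calc star v ⬝ᵥ v = star v ⬝ᵥ U.mulVec w := by rw [hwv]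
      _ = star w ⬝ᵥ w := hdot w
      _ = ((∑ i : Fin Nt, Complex.normSq (w i) : ℝ) : ℂ) := by
          simp only [dotProduct, Pi.star_apply]
          rw [Complex.ofReal_sum]
          refine Finset.sum_congr rfl fun i _ => ?_
          simpa using hterm (w i) 1
  have hwne : w ≠ 0 := by
    intro h
    exact hv (by rw [← hwv, h, Matrix.mulVec_zero])
  obtain ⟨i0, hi0⟩ := Function.ne_iff.mp hwne
  have hN : 0 < ∑ i : Fin Nt, Complex.normSq (w i) := by
    refine Finset.sum_pos' (fun i _ => Complex.normSq_nonneg _) ⟨i0, Finset.mem_univ _, ?_⟩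
    exact Complex.normSq_pos.mpr hi0
  have hm0 : ∀ i, 0 ≤ m i := by
    intro i
    rw [hm]
    simp only
    split_ifs with h
    · apply div_nonneg
      · nlinarith [hnn i, sq_nonneg (lam i)]
      · nlinarith [hnn i]
    · exact le_refl 0
  have hbound : ∑ i : Fin Nt, (lam i - m i) * Complex.normSq (w i)
      ≤ lam ⟨0, hNt⟩ * ∑ i : Fin Nt, Complex.normSq (w i) := by
    rw [Finset.mul_sum]
    refine Finset.sum_le_sum fun i _ => ?_
    refine mul_le_mul_of_nonneg_right ?_ (Complex.normSq_nonneg _)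
    have hlam : lam i ≤ lam ⟨0, hNt⟩ := hmono (by simp [Fin.le_def])
    have := hm0 i
    linarith
  rw [htr, Complex.ofReal_re, h2, h3, Complex.ofReal_re, Complex.ofReal_re]
  have hq : (∑ i : Fin Nt, (lam i - m i) * Complex.normSq (w i))
      / (∑ i : Fin Nt, Complex.normSq (w i)) ≤ lam ⟨0, hNt⟩ := by
    rw [div_le_iff₀ hN]
    linarith [hbound]
  linarith [hq]
end

section
/- (MSE after two training blocks, eq. (mse_x1)) Assume tr(R) = N_t and η ∈ [0, 1]. Let X_0 = √ρ · U_{[1:T]} and M_1 = η² (R − R X_0 (I_T + X_0^H R X_0)^{-1} X_0^H R) + (1 − η²) R. Then U^H M_1 U is diagonal; let λ_{1,1} ≥ ⋯ ≥ λ_{1,N_t} be its diagonal entries sorted in decreasing order, and let X_1 = √ρ times the T columns of U corresponding to the T largest diagonal entries. Then (1/N_t) tr(M_1 − M_1 X_1 (I_T + X_1^H M_1 X_1)^{-1} X_1^H M_1) = 1 − (1/N_t) ( η² Σ_{t=1}^{T} ρ λ_t² / (ρ λ_t + 1) + Σ_{t=1}^{T} ρ λ_{1,t}² / (ρ λ_{1,t}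 + 1) ). -/
open Matrix BigOperators

lemma sel_conj {Nt T : ℕ} (e : Fin T → Fin Nt) (he : Function.Injective e)
    (v : Fin Nt → ℂ) :
    (Matrix.of (fun (i : Fin Nt) (t : Fin T) => if i = e t then (1:ℂ) else 0))ᴴ *
      Matrix.diagonal v *
      (Matrix.of (fun (i : Fin Nt) (t : Fin T) => if i = e t then (1:ℂ) else 0))
      = Matrix.diagonal (fun t => v (e t)) := by
  ext s t
  simp only [Matrix.mul_apply, Matrix.conjTranspose_apply, Matrix.of_apply,
    Matrix.diagonal_apply, apply_ite (starRingEnd ℂ), _root_.map_one, _root_.map_zero,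
    ite_mul, mul_ite, one_mul, mul_one, zero_mul, mul_zero]
  simp only [Finset.sum_ite_eq', Finset.mem_univ, if_true]
  by_cases h : s = t
  · subst h; simp
  · have hne : e t ≠ e s := fun hc => h (he hc).symm
    simp [h, hne]

lemma sel_conj' {Nt T : ℕ} (e : Fin T → Fin Nt) (he : Function.Injective e)
    (v : Fin Nt → ℂ) (c : ℂ) :
    ((c • Matrix.of (fun (i : Fin Nt) (t : Fin T) => if i = e t then (1:ℂ) else 0)))ᴴ *
      Matrix.diagonal v *
      (c • Matrix.of (fun (i : Fin Nt) (t : Fin T) => if i = e t then (1:ℂ) else 0))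
      = Matrix.diagonal (fun t => (star c * c) * v (e t)) := by
  rw [Matrix.conjTranspose_smul, Matrix.smul_mul, Matrix.smul_mul, Matrix.mul_smul,
    sel_conj e he v, smul_smul]
  ext s t
  simp [Matrix.diagonal_apply, mul_ite]

lemma trace_conj {Nt : ℕ} {U : Matrix (Fin Nt) (Fin Nt) ℂ} (hU1 : Uᴴ * U = 1)
    (A : Matrix (Fin Nt) (Fin Nt) ℂ) : (U * A * Uᴴ).trace = A.trace := by
  rw [Matrix.trace_mul_comm, ← Matrix.mul_assoc, hU1, Matrix.one_mul]

lemma diag_congr {T : ℕ} {v w : Fin T → ℂ} (h : ∀ t, v t = w t) :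
    Matrix.diagonal v = Matrix.diagonal w := congrArg _ (funext h)

lemma key {Nt T : ℕ} (ρ : ℝ) (hρ : 0 < ρ) (U : Matrix (Fin Nt) (Fin Nt) ℂ)
    (hU1 : Uᴴ * U = 1) (d : Fin Nt → ℝ) (hd : ∀ j, 0 ≤ d j)
    (e : Fin T → Fin Nt) (he : Function.Injective e)
    (M : Matrix (Fin Nt) (Fin Nt) ℂ)
    (hM : M = U * Matrix.diagonal (fun j => (d j : ℂ)) * Uᴴ)
    (X : Matrix (Fin Nt) (Fin T) ℂ)
    (hX : X = fun i t => (Real.sqrt ρ : ℂ) * U i (e t)) :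
    (M - M * X * (1 + Xᴴ * M * X)⁻¹ * Xᴴ * M).trace
      = (((∑ j, d j) - ∑ t, ρ * (d (e t))^2 / (ρ * d (e t) + 1) : ℝ) : ℂ) := by
  set E : Matrix (Fin Nt) (Fin T) ℂ :=
    Matrix.of (fun (i : Fin Nt) (t : Fin T) => if i = e t then (1:ℂ) else 0) with hE
  set c : ℂ := (Real.sqrt ρ : ℂ) with hc
  have hcc : star c * c = (ρ : ℂ) := by
    rw [hc, Complex.star_def, Complex.conj_ofReal]
    norm_cast
    exact Real.mul_self_sqrt hρ.le
  set Y : Matrix (Fin Nt) (Fin T) ℂ := c • E with hY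
  set D : Matrix (Fin Nt) (Fin Nt) ℂ := Matrix.diagonal (fun j => (d j : ℂ)) with hD
  have hUA : ∀ A : Matrix (Fin Nt) (Fin T) ℂ, Uᴴ * (U * A) = A := fun A => by
    rw [← Matrix.mul_assoc, hU1, Matrix.one_mul]
  have hUB : ∀ A : Matrix (Fin Nt) (Fin Nt) ℂ, Uᴴ * (U * A) = A := fun A => by
    rw [← Matrix.mul_assoc, hU1, Matrix.one_mul]
  have hXE : X = U * Y := by
    ext i t
    simp only [hX, hY, hE, Matrix.mul_apply, Matrix.smul_apply, Matrix.of_apply,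
      smul_eq_mul, mul_ite, mul_one, mul_zero, Finset.sum_ite_eq', Finset.mem_univ, if_true]
    ring
  have h1 : Yᴴ * D * Y = Matrix.diagonal (fun t => ((ρ * d (e t) : ℝ) : ℂ)) := by
    rw [hY, hD, sel_conj' e he _ c]
    exact diag_congr fun t => by rw [hcc]; push_cast; ring
  have h2 : Yᴴ * (D * D) * Y = Matrix.diagonal (fun t => ((ρ * d (e t) ^ 2 : ℝ) : ℂ)) := by
    rw [hY, hD, Matrix.diagonal_mul_diagonal, sel_conj' e he _ c]
    exact diag_congr fun t => by rw [hcc]; push_cast; ring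
  have hne : ∀ t : Fin T, ((ρ * d (e t) + 1 : ℝ) : ℂ) ≠ 0 := by
    intro t
    have h0 : 0 ≤ d (e t) := hd (e t)
    have : (0:ℝ) < ρ * d (e t) + 1 := by positivity
    exact Complex.ofReal_ne_zero.mpr this.ne'
  have hXMX : Xᴴ * M * X = Yᴴ * D * Y := by
    rw [hXE, hM, Matrix.conjTranspose_mul]
    simp only [Matrix.mul_assoc]
    simp only [hUA, hUB]
  have hplus : (1 : Matrix (Fin T) (Fin T) ℂ) + Xᴴ * M * X
      = Matrix.diagonal (fun t => ((ρ * d (e t) + 1 : ℝ) : ℂ)) := by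
    rw [hXMX, h1, ← Matrix.diagonal_one, Matrix.diagonal_add]
    exact diag_congr fun t => by push_cast; ring
  have hG : (1 + Xᴴ * M * X)⁻¹
      = Matrix.diagonal (fun t => ((ρ * d (e t) + 1 : ℝ) : ℂ)⁻¹) := by
    rw [hplus]
    apply Matrix.inv_eq_right_inv
    rw [Matrix.diagonal_mul_diagonal, ← Matrix.diagonal_one]
    exact diag_congr fun t => mul_inv_cancel₀ (hne t)
  have hMX : M * X = U * (D * Y) := by
    rw [hM, hXE]
    simp only [Matrix.mul_assoc]
    rw [hUA]
  have hXM : Xᴴ * M = Yᴴ * (D * Uᴴ) := by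
    rw [hM, hXE, Matrix.conjTranspose_mul]
    simp only [Matrix.mul_assoc]
    rw [hUB]
  have hZ : M * X * (1 + Xᴴ * M * X)⁻¹ * Xᴴ * M
      = U * (D * Y * (1 + Xᴴ * M * X)⁻¹ * (Yᴴ * D)) * Uᴴ := by
    rw [hMX, hXM]
    simp only [Matrix.mul_assoc]
    rw [hXM]
  have htrM : M.trace = ∑ j, ((d j : ℝ) : ℂ) := by
    rw [hM, trace_conj hU1, hD, Matrix.trace_diagonal]
  have htr2 : (D * Y * (1 + Xᴴ * M * X)⁻¹ * (Yᴴ * D)).trace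
      = ∑ t, ((ρ * d (e t) + 1 : ℝ) : ℂ)⁻¹ * ((ρ * d (e t) ^ 2 : ℝ) : ℂ) := by
    rw [show D * Y * (1 + Xᴴ * M * X)⁻¹ * (Yᴴ * D)
        = (D * Y) * ((1 + Xᴴ * M * X)⁻¹ * (Yᴴ * D)) by simp only [Matrix.mul_assoc],
      Matrix.trace_mul_comm, Matrix.mul_assoc,
      show Yᴴ * D * (D * Y) = Yᴴ * (D * D) * Y by simp only [Matrix.mul_assoc],
      h2, hG, Matrix.diagonal_mul_diagonal, Matrix.trace_diagonal]
  rw [Matrix.trace_sub, htrM, hZ, trace_conj hU1, htr2]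
  push_cast
  congr 1
  exact Finset.sum_congr rfl fun t _ => inv_mul_eq_div _ _

/-- MSE after two training blocks, eq. (mse_x1): with `tr(R) = N_t`,
`X_0 = √ρ U_{[1:T]}`, `M_1` the one-step prediction covariance, `λ_{1,t}` its
eigenvalues (the diagonal entries of `Uᴴ M_1 U`) sorted decreasingly via a
permutation `σ`, and `X_1 = √ρ` times the `T` columns of `U` selected by `σ`,
the MSE of block 1 equals
`1 − (1/N_t)(η² Σ_{t=1}^T ρ λ_t²/(ρ λ_t+1) + Σ_{t=1}^T ρ λ_{1,t}²/(ρ λ_{1,t}+1))`. -/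
theorem stmt_10 (Nt T : ℕ) (hNt : 0 < Nt) (hT : 0 < T) (hTN : T ≤ Nt)
    (ρ : ℝ) (hρ : 0 < ρ) (η : ℝ) (hη0 : 0 ≤ η) (hη1 : η ≤ 1)
    (U : Matrix (Fin Nt) (Fin Nt) ℂ) (hU1 : Uᴴ * U = 1) (hU2 : U * Uᴴ = 1)
    (lam : Fin Nt → ℝ) (hnn : ∀ t, 0 ≤ lam t) (hmono : Antitone lam)
    (R : Matrix (Fin Nt) (Fin Nt) ℂ)
    (hR : R = U * Matrix.diagonal (fun t => (lam t : ℂ)) * Uᴴ)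
    (htr : R.trace = (Nt : ℂ))
    (X0 : Matrix (Fin Nt) (Fin T) ℂ)
    (hX0 : X0 = fun i t => (Real.sqrt ρ : ℂ) * U i (Fin.castLE hTN t))
    (M1 : Matrix (Fin Nt) (Fin Nt) ℂ)
    (hM1 : M1 = ((η : ℂ) ^ 2) • (R - R * X0 * (1 + X0ᴴ * R * X0)⁻¹ * X0ᴴ * R)
      + (1 - (η : ℂ) ^ 2) • R)
    (lam1 : Fin Nt → ℝ) (hnn1 : ∀ t, 0 ≤ lam1 t) (hmono1 : Antitone lam1)
    (σ : Equiv.Perm (Fin Nt))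
    (hdiag1 : Uᴴ * M1 * U = Matrix.diagonal (fun j => (lam1 (σ.symm j) : ℂ)))
    (X1 : Matrix (Fin Nt) (Fin T) ℂ)
    (hX1 : X1 = fun i t => (Real.sqrt ρ : ℂ) * U i (σ (Fin.castLE hTN t))) :
    (1 / (Nt : ℝ)) * (M1 - M1 * X1 * (1 + X1ᴴ * M1 * X1)⁻¹ * X1ᴴ * M1).trace.re
      = 1 - (1 / (Nt : ℝ)) *
        (η ^ 2 * ∑ t : Fin T,
            ρ * lam (Fin.castLE hTN t) ^ 2 / (ρ * lam (Fin.castLE hTN t) + 1)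
          + ∑ t : Fin T,
            ρ * lam1 (Fin.castLE hTN t) ^ 2 / (ρ * lam1 (Fin.castLE hTN t) + 1)) := by
  set A : ℝ := ∑ t : Fin T,
      ρ * lam (Fin.castLE hTN t) ^ 2 / (ρ * lam (Fin.castLE hTN t) + 1) with hA
  set B : ℝ := ∑ t : Fin T,
      ρ * lam1 (Fin.castLE hTN t) ^ 2 / (ρ * lam1 (Fin.castLE hTN t) + 1) with hB
  have he0 : Function.Injective (Fin.castLE hTN) := Fin.castLE_injective hTN
  have key0 := key ρ hρ U hU1 lam hnn (Fin.castLE hTN) he0 R hR X0 hX0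
  have hsum_lam : (∑ j, lam j) = (Nt : ℝ) := by
    have h1 : (((∑ j, lam j : ℝ)) : ℂ) = (Nt : ℂ) := by
      push_cast
      rw [← htr, hR, trace_conj hU1, Matrix.trace_diagonal]
    exact_mod_cast h1
  have key0' : (R - R * X0 * (1 + X0ᴴ * R * X0)⁻¹ * X0ᴴ * R).trace
      = (((Nt : ℝ) - A : ℝ) : ℂ) := by rw [key0, hsum_lam]
  have hM1diag : M1 = U * Matrix.diagonal (fun j => (lam1 (σ.symm j) : ℂ)) * Uᴴ := by
    rw [← hdiag1]
    calc M1 = (U * Uᴴ) * M1 * (U * Uᴴ) := by rw [hU2, Matrix.one_mul, Matrix.mul_one]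
    _ = U * (Uᴴ * M1 * U) * Uᴴ := by simp only [Matrix.mul_assoc]
  have he1 : Function.Injective (fun t => σ (Fin.castLE hTN t)) :=
    fun a b h => he0 (σ.injective h)
  have key1 := key ρ hρ U hU1 (fun j => lam1 (σ.symm j)) (fun j => hnn1 _)
    (fun t => σ (Fin.castLE hTN t)) he1 M1 hM1diag X1 hX1
  simp only [Equiv.symm_apply_apply] at key1
  have htrM1a : M1.trace = (((∑ j, lam1 (σ.symm j) : ℝ)) : ℂ) := by
    rw [hM1diag, trace_conj hU1, Matrix.trace_diagonal]
    push_cast; rfl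
  have htrM1b : M1.trace = ((η ^ 2 * ((Nt : ℝ) - A) + (1 - η ^ 2) * Nt : ℝ) : ℂ) := by
    rw [hM1, Matrix.trace_add, Matrix.trace_smul, Matrix.trace_smul, key0', hR,
      trace_conj hU1, Matrix.trace_diagonal]
    have : (∑ j, ((lam j : ℝ) : ℂ)) = ((Nt : ℝ) : ℂ) := by
      push_cast; exact_mod_cast congrArg Complex.ofReal hsum_lam
    rw [this]
    simp only [smul_eq_mul]
    push_cast
    ring
  have hS1 : (∑ j, lam1 (σ.symm j)) = η ^ 2 * ((Nt : ℝ) - A) + (1 - η ^ 2) * Nt := by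
    have h2 := htrM1a.symm.trans htrM1b
    exact_mod_cast h2
  rw [key1, Complex.ofReal_re, hS1]
  have hNtR : (Nt : ℝ) ≠ 0 := Nat.cast_ne_zero.mpr hNt.ne'
  field_simp
  ring
end

section
/- (Invariance of the eigenbasis under the closed-loop Kalman recursion) Fix η ∈ [0, 1]. For each k, let S_k ⊆ {1, …, N_t} be any subset of size T, let U_{S_k} denote the N_t × T matrix whose columns are the columns of U indexed by S_k, and set X_k = √ρ · U_{S_k}. Define M_0 = R and M_{k+1} = η² (M_k − M_k X_k (I_T + X_k^H M_k X_k)^{-1} X_k^H M_k) + (1 − η²) R. Then for every k ≥ 0, the matrix U^H M_k U is diagonal with nonnegative real diagonal entries; i.e., every prediction covariance M_k is diagonalized by the eigenvector matrix U of R. -/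
open Matrix BigOperators

noncomputable def selP {Nt T : ℕ} (f : Fin T → Fin Nt) : Matrix (Fin Nt) (Fin T) ℂ :=
  Matrix.of fun i t => if i = f t then 1 else 0

lemma selP_left {Nt T : ℕ} (f : Fin T → Fin Nt) (hf : Function.Injective f)
    (c : Fin Nt → ℂ) :
    (selP f)ᴴ * Matrix.diagonal c * selP f = Matrix.diagonal fun t => c (f t) := by
  ext s t
  simp only [Matrix.mul_apply, selP, Matrix.conjTranspose_apply, Matrix.of_apply,
    Matrix.diagonal_apply, apply_ite star, star_one, star_zero, ite_mul, one_mul, zero_mul,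
    mul_ite, mul_one, mul_zero, Finset.sum_ite_eq, Finset.sum_ite_eq', Finset.mem_univ, if_true]
  by_cases h : s = t
  · subst h; simp
  · rw [if_neg h, if_neg (fun hc => h (hf hc.symm))]

lemma selP_right {Nt T : ℕ} (f : Fin T → Fin Nt) (g : Fin T → ℂ) :
    selP f * Matrix.diagonal g * (selP f)ᴴ
      = Matrix.diagonal fun i => ∑ t, if i = f t then g t else 0 := by
  ext i j
  simp only [Matrix.mul_apply, selP, Matrix.conjTranspose_apply, Matrix.of_apply,
    Matrix.diagonal_apply, apply_ite star, star_one, star_zero, ite_mul, one_mul, zero_mul,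
    mul_ite, mul_one, mul_zero, Finset.sum_ite_eq, Finset.sum_ite_eq', Finset.mem_univ, if_true]
  by_cases h : i = j
  · subst h
    rw [if_pos rfl]
    refine Finset.sum_congr rfl fun t _ => ?_
    by_cases hj : i = f t <;> simp [hj]
  · rw [if_neg h]
    apply Finset.sum_eq_zero
    intro t _
    by_cases hj : j = f t
    · rw [if_pos hj, if_neg (hj ▸ h)]
    · rw [if_neg hj]

set_option maxHeartbeats 1000000 in
/-- invariance of the eigenbasis under the closed-loop Kalman
recursion: if each training matrix `X_k` consists of `√ρ` times `T` distinct
columns of `U` (indexed by an arbitrary size-`T` subset via an injection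
`f k : Fin T → Fin N_t`), then every prediction covariance `M_k` in the
recursion `M_0 = R`, `M_{k+1} = η²(M_k − M_k X_k (I + X_kᴴ M_k X_k)⁻¹ X_kᴴ M_k) + (1−η²) R`
is diagonalized by `U` with nonnegative real diagonal entries. -/
theorem stmt_11 (Nt T : ℕ) (hNt : 0 < Nt) (hT : 0 < T) (hTN : T ≤ Nt)
    (ρ : ℝ) (hρ : 0 < ρ) (η : ℝ) (hη0 : 0 ≤ η) (hη1 : η ≤ 1)
    (U : Matrix (Fin Nt) (Fin Nt) ℂ) (hU1 : Uᴴ * U = 1) (hU2 : U * Uᴴ = 1)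
    (lam : Fin Nt → ℝ) (hnn : ∀ t, 0 ≤ lam t) (hmono : Antitone lam)
    (R : Matrix (Fin Nt) (Fin Nt) ℂ)
    (hR : R = U * Matrix.diagonal (fun t => (lam t : ℂ)) * Uᴴ)
    (f : ℕ → Fin T → Fin Nt) (hf : ∀ k, Function.Injective (f k))
    (X : ℕ → Matrix (Fin Nt) (Fin T) ℂ)
    (hX : ∀ k, X k = fun i t => (Real.sqrt ρ : ℂ) * U i (f k t))
    (M : ℕ → Matrix (Fin Nt) (Fin Nt) ℂ)
    (hM0 : M 0 = R)
    (hMrec : ∀ k, M (k + 1)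
      = ((η : ℂ) ^ 2) • (M k - M k * X k * (1 + (X k)ᴴ * M k * X k)⁻¹ * (X k)ᴴ * M k)
        + (1 - (η : ℂ) ^ 2) • R) :
    ∀ k : ℕ, ∃ d : Fin Nt → ℝ, (∀ j, 0 ≤ d j) ∧
      Uᴴ * M k * U = Matrix.diagonal (fun j => (d j : ℂ)) := by
  have hUU : ∀ {m : ℕ} (Y : Matrix (Fin Nt) (Fin m) ℂ), Uᴴ * (U * Y) = Y := by
    intro m Y; rw [← Matrix.mul_assoc, hU1, Matrix.one_mul]
  have hRdiag : Uᴴ * R * U = Matrix.diagonal (fun j => (lam j : ℂ)) := by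
    rw [hR]
    simp only [Matrix.mul_assoc, hUU, hU1, Matrix.mul_one]
  intro k
  induction k with
  | zero => exact ⟨lam, hnn, by rw [hM0]; exact hRdiag⟩
  | succ k ih =>
    obtain ⟨d, hd, hDk⟩ := ih
    set c : Fin Nt → ℂ := fun j => (d j : ℂ) with hc
    -- recover M k
    have hMk : M k = U * Matrix.diagonal c * Uᴴ := by
      calc M k = (U * Uᴴ) * M k * (U * Uᴴ) := by rw [hU2, one_mul, Matrix.mul_one]
        _ = U * (Uᴴ * M k * U) * Uᴴ := by simp only [Matrix.mul_assoc]
        _ = U * Matrix.diagonal c * Uᴴ := by rw [hDk, Matrix.mul_assoc]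
    set P : Matrix (Fin Nt) (Fin T) ℂ := selP (f k) with hP
    have hXk : X k = (Real.sqrt ρ : ℂ) • (U * P) := by
      rw [hX k]
      ext i t
      simp [hP, selP, Matrix.mul_apply, mul_ite, mul_one, mul_zero, Finset.sum_ite_eq',
        Matrix.smul_apply]
    have hsρ : ((Real.sqrt ρ : ℂ)) * (Real.sqrt ρ : ℂ) = (ρ : ℂ) := by
      rw [← Complex.ofReal_mul, Real.mul_self_sqrt hρ.le]
    have hXH : (X k)ᴴ = (Real.sqrt ρ : ℂ) • (Pᴴ * Uᴴ) := by
      rw [hXk, Matrix.conjTranspose_smul, Matrix.conjTranspose_mul]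
      congr 1
      simp [Complex.star_def, Complex.conj_ofReal]
    -- X^H M X
    have hXMX : (X k)ᴴ * M k * X k
        = Matrix.diagonal (fun t => ((ρ * d (f k t) : ℝ) : ℂ)) := by
      rw [hXH, hXk, hMk]
      simp only [Matrix.smul_mul, Matrix.mul_smul, smul_smul, hsρ, Matrix.mul_assoc, hUU]
      rw [← Matrix.mul_assoc Pᴴ (Matrix.diagonal c) P, hP, selP_left (f k) (hf k) c, ← Matrix.diagonal_smul]
      rw [Matrix.diagonal_eq_diagonal_iff]
      intro t
      simp only [hc, Pi.smul_apply, smul_eq_mul]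
      push_cast
      ring
    -- the inverse
    set w : Fin T → ℂ := fun t => ((1 + ρ * d (f k t) : ℝ) : ℂ) with hw
    have hwpos : ∀ t, (0:ℝ) < 1 + ρ * d (f k t) := by
      intro t; have := hd (f k t); positivity
    have hwne : ∀ t, w t ≠ 0 := by
      intro t
      simp only [hw, ne_eq, Complex.ofReal_eq_zero]
      exact (hwpos t).ne'
    have h1 : 1 + (X k)ᴴ * M k * X k = Matrix.diagonal w := by
      rw [hXMX, ← Matrix.diagonal_one, Matrix.diagonal_add, Matrix.diagonal_eq_diagonal_iff]
      intro t
      simp only [hw, Pi.add_apply, Pi.one_apply]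
      push_cast
      ring
    have hInv : (1 + (X k)ᴴ * M k * X k)⁻¹ = Matrix.diagonal (fun t => (w t)⁻¹) := by
      rw [h1]
      apply Matrix.inv_eq_right_inv
      rw [Matrix.diagonal_mul_diagonal,
        show (fun i => w i * (w i)⁻¹) = fun _ => (1:ℂ) from funext fun t => mul_inv_cancel₀ (hwne t),
        Matrix.diagonal_one]
    -- the real diagonal correction
    set hr : Fin Nt → ℝ := fun j => ∑ t, if j = f k t then (1 + ρ * d (f k t))⁻¹ else 0 with hhr
    have hPgP : P * Matrix.diagonal (fun t => (w t)⁻¹) * Pᴴ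
        = Matrix.diagonal (fun j => ((hr j : ℝ) : ℂ)) := by
      rw [hP, selP_right (f k) _, Matrix.diagonal_eq_diagonal_iff]
      intro j
      simp only [hhr, hw]
      rw [Complex.ofReal_sum]
      refine Finset.sum_congr rfl fun t _ => ?_
      by_cases h : j = f k t <;> simp [h]
    -- the big middle term conjugated by U
    have hbig : Uᴴ * (M k * X k * (1 + (X k)ᴴ * M k * X k)⁻¹ * (X k)ᴴ * M k) * U
        = Matrix.diagonal (fun j => ((ρ * (d j * hr j * d j) : ℝ) : ℂ)) := by
      rw [hInv, hXH, hXk, hMk]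
      simp only [Matrix.smul_mul, Matrix.mul_smul, smul_smul, hsρ, Matrix.mul_assoc, hUU, hU1,
        Matrix.mul_one]
      rw [show P * ((Matrix.diagonal fun t => (w t)⁻¹) * (Pᴴ * Matrix.diagonal c))
          = (P * Matrix.diagonal (fun t => (w t)⁻¹) * Pᴴ) * Matrix.diagonal c by
            simp only [Matrix.mul_assoc], hPgP, Matrix.diagonal_mul_diagonal,
        Matrix.diagonal_mul_diagonal, ← Matrix.diagonal_smul]
      rw [Matrix.diagonal_eq_diagonal_iff]
      intro j
      simp only [hc, Pi.smul_apply, smul_eq_mul]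
      push_cast
      ring
    refine ⟨fun j => η^2 * (d j - ρ * (d j * hr j * d j)) + (1 - η^2) * lam j, ?_, ?_⟩
    · intro j
      have hη2 : (0:ℝ) ≤ 1 - η^2 := by nlinarith
      have hhr0 : 0 ≤ hr j := by
        rw [hhr]
        apply Finset.sum_nonneg
        intro t _
        have := hd (f k t)
        have h1p : (0:ℝ) < 1 + ρ * d (f k t) := by positivity
        split
        · positivity
        · exact le_refl 0
      have hcard : (Finset.univ.filter (fun t => j = f k t)).card ≤ 1 := by
        apply Finset.card_le_one.mpr
        intro a ha b hb
        simp only [Finset.mem_filter] at ha hb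
        exact hf k (ha.2.symm.trans hb.2)
      have hrval : hr j = ((Finset.univ.filter (fun t => j = f k t)).card : ℝ)
          * (1 + ρ * d j)⁻¹ := by
        simp only [hhr]
        rw [← Finset.sum_filter]
        rw [Finset.sum_congr rfl (fun t ht => by
          simp only [Finset.mem_filter] at ht
          rw [← ht.2])]
        rw [Finset.sum_const, nsmul_eq_mul]
      have hpos : (0:ℝ) < 1 + ρ * d j := by have := hd j; positivity
      have hrle : hr j ≤ (1 + ρ * d j)⁻¹ := by
        rw [hrval]
        have : ((Finset.univ.filter (fun t => j = f k t)).card : ℝ) ≤ 1 := by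
          exact_mod_cast hcard
        nlinarith [inv_nonneg.mpr hpos.le]
      have hinv : (1 + ρ * d j) * (1 + ρ * d j)⁻¹ = 1 := mul_inv_cancel₀ hpos.ne'
      have key : 0 ≤ d j - ρ * (d j * hr j * d j) := by
        nlinarith [hinv, hpos, hd j, mul_le_mul_of_nonneg_left hrle (mul_nonneg (mul_nonneg hρ.le (hd j)) (hd j))]
      have := hnn j
      positivity
    · rw [hMrec k]
      simp only [Matrix.mul_add, Matrix.add_mul, Matrix.mul_smul, Matrix.smul_mul,
        Matrix.mul_sub, Matrix.sub_mul]
      rw [hDk, hbig, hRdiag]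
      ext i j
      by_cases h : i = j
      · subst h
        simp only [Matrix.add_apply, Matrix.smul_apply, Matrix.sub_apply,
          Matrix.diagonal_apply_eq, hc, smul_eq_mul]
        push_cast
        ring
      · simp [Matrix.diagonal_apply_ne _ h, h]
end

section
/- (High-SNR training objective bound) Let A be an N × N complex Hermitian positive definite matrix with eigenvalues λ_1 ≥ ⋯ ≥ λ_N > 0 and unitary eigenvector matrix U. Then for every X ∈ ℂ^{N × T} with X^H X = ρ I_T (ρ > 0, T ≤ N), the matrix X^H A X is positive definite and tr( (X^H A X)^{-1} X^H A² X ) ≤ Σ_{t=1}^{T} λ_t, with equality for X = √ρ · U_{[1:T]}. -/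
open Matrix BigOperators
open scoped ComplexOrder

/-!
Write `A = U D Uᴴ` with `D = diag λ` and `Y = Uᴴ X`, so that `Yᴴ Y = ρ I` and the objective is
`tr((Yᴴ D Y)⁻¹ Yᴴ D² Y)`. With `Z = D^{1/2} Y` this is `tr(P D) = Σᵢ Pᵢᵢ λᵢ`, where
`P = Z (Zᴴ Z)⁻¹ Zᴴ` is the orthogonal projection onto the range of `Z`. Its diagonal entries lie
in `[0, 1]` and sum to `rank P = T`, and among such weights `Σᵢ Pᵢᵢ λᵢ` is largest when the
weight sits on the `T` largest eigenvalues. For `X = √ρ U_{[1:T]}` the columns of `X` are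
eigenvectors, `A X = X Λ_T`, and the objective collapses to `tr Λ_T`.
-/

lemma Antitone.exists_threshold_fin {N : ℕ} {lam : Fin N → ℝ} (hmono : Antitone lam) (T : ℕ) :
    ∃ c, (∀ i : Fin N, (i : ℕ) < T → c ≤ lam i) ∧ ∀ i : Fin N, T ≤ (i : ℕ) → lam i ≤ c := by
  rcases N.eq_zero_or_pos with rfl | hN
  · exact ⟨0, fun i => i.elim0, fun i => i.elim0⟩
  · refine ⟨lam ⟨min T (N - 1), by omega⟩, fun i hi => hmono ?_, fun i hi => hmono ?_⟩ <;>
      rw [Fin.le_def] <;> dsimp only <;> omega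

lemma Fin.sum_castLE_eq_sum_ite {M : Type*} [AddCommMonoid M] {N T : ℕ} (hTN : T ≤ N)
    (f : Fin N → M) :
    ∑ t : Fin T, f (Fin.castLE hTN t) = ∑ i : Fin N, if (i : ℕ) < T then f i else 0 := by
  rw [← Finset.sum_filter]
  refine (Finset.sum_map _ (Fin.castLEEmb hTN) f).symm.trans (congrArg (Finset.sum · f) ?_)
  ext i
  simp only [Finset.mem_map, Finset.mem_univ, true_and, Finset.mem_filter]
  exact ⟨fun ⟨t, ht⟩ => ht ▸ t.2, fun hi => ⟨⟨i, hi⟩, rfl⟩⟩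

theorem sum_mul_le_sum_castLE_of_antitone {N T : ℕ} (hTN : T ≤ N) {lam : Fin N → ℝ}
    (hmono : Antitone lam) {α : Fin N → ℝ} (h0 : ∀ i, 0 ≤ α i) (h1 : ∀ i, α i ≤ 1)
    (hsum : ∑ i, α i = T) :
    ∑ i, lam i * α i ≤ ∑ t : Fin T, lam (Fin.castLE hTN t) := by
  obtain ⟨c, hc_head, hc_tail⟩ := hmono.exists_threshold_fin T
  set β : Fin N → ℝ := fun i => if (i : ℕ) < T then 1 else 0
  have hβ_sum : ∑ i, β i = T := by
    simpa [β] using (Fin.sum_castLE_eq_sum_ite hTN fun _ => (1 : ℝ)).symm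
  have hrhs : ∑ t : Fin T, lam (Fin.castLE hTN t) = ∑ i, lam i * β i := by
    simp only [Fin.sum_castLE_eq_sum_ite, β, mul_ite, mul_one, mul_zero]
  -- `c` separates the head `i < T` from the tail, and `α - β` is `≤ 0` on the head, `≥ 0` after.
  have key : ∀ i, lam i * (α i - β i) ≤ c * (α i - β i) := by
    intro i
    by_cases hi : (i : ℕ) < T
    · simp only [β, if_pos hi]
      exact mul_le_mul_of_nonpos_right (hc_head i hi) (by linarith [h1 i])
    · simp only [β, if_neg hi, sub_zero]
      exact mul_le_mul_of_nonneg_right (hc_tail i (not_lt.mp hi)) (h0 i)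
  have hdiff := Finset.sum_le_sum (s := Finset.univ) fun i _ => key i
  rw [← Finset.mul_sum, Finset.sum_sub_distrib, hsum, hβ_sum, sub_self, mul_zero] at hdiff
  simp only [mul_sub, Finset.sum_sub_distrib, sub_nonpos] at hdiff
  rwa [hrhs]

section CommRing

variable {n m R : Type*} [Fintype n] [DecidableEq m] [CommRing R] [StarRing R]

lemma isStarProjection_mul_inv_mul_conjTranspose [Fintype m] (Z : Matrix n m R)
    (hZ : IsUnit (Zᴴ * Z).det) : IsStarProjection (Z * (Zᴴ * Z)⁻¹ * Zᴴ) := by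
  refine ⟨?_, ?_⟩
  · rw [IsIdempotentElem, show Z * (Zᴴ * Z)⁻¹ * Zᴴ * (Z * (Zᴴ * Z)⁻¹ * Zᴴ)
        = Z * ((Zᴴ * Z)⁻¹ * (Zᴴ * Z)) * (Zᴴ * Z)⁻¹ * Zᴴ by simp only [Matrix.mul_assoc],
      nonsing_inv_mul _ hZ, Matrix.mul_one]
  · rw [IsSelfAdjoint, star_eq_conjTranspose]
    simp only [conjTranspose_mul, conjTranspose_conjTranspose, conjTranspose_nonsing_inv,
      Matrix.mul_assoc]

lemma trace_mul_inv_mul_conjTranspose [Fintype m] (Z : Matrix n m R) (hZ : IsUnit (Zᴴ * Z).det) :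
    (Z * (Zᴴ * Z)⁻¹ * Zᴴ).trace = Fintype.card m := by
  rw [trace_mul_cycle, mul_nonsing_inv _ hZ, trace_one]

lemma trace_inv_mul_eq_trace_of_mul_eq_mul [Fintype m] {A : Matrix n n R} {X : Matrix n m R}
    {M : Matrix m m R} (hAX : A * X = X * M) (hB : IsUnit (Xᴴ * A * X).det) :
    ((Xᴴ * A * X)⁻¹ * (Xᴴ * (A * A) * X)).trace = M.trace := by
  have hA2 : Xᴴ * (A * A) * X = Xᴴ * A * X * M := by
    rw [Matrix.mul_assoc, Matrix.mul_assoc, hAX]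
    simp only [Matrix.mul_assoc]
  rw [hA2, nonsing_inv_mul_cancel_left _ _ hB]

lemma conjTranspose_mul_self_submatrix_id [DecidableEq n] {U : Matrix n n R} (hU : Uᴴ * U = 1)
    {f : m → n} (hf : Function.Injective f) : (U.submatrix id f)ᴴ * U.submatrix id f = 1 := by
  rw [conjTranspose_submatrix, ← submatrix_mul _ _ _ _ _ Function.bijective_id, hU,
    submatrix_one _ hf]

lemma mul_submatrix_id_eq_submatrix_id_mul_diagonal [Fintype m] [DecidableEq n] {U : Matrix n n R}
    (hU : Uᴴ * U = 1) (d : n → R) (f : m → n) :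
    U * diagonal d * Uᴴ * U.submatrix id f = U.submatrix id f * diagonal (d ∘ f) := by
  rw [← submatrix_id_id (U * diagonal d * Uᴴ), ← submatrix_mul _ _ _ _ _ Function.bijective_id,
    Matrix.mul_assoc, hU, Matrix.mul_one]
  ext i t
  simp [mul_diagonal]

end CommRing

variable {n m 𝕜 : Type*} [RCLike 𝕜]

lemma IsStarProjection.re_diag_mem_Icc [Fintype n] {Q : Matrix n n 𝕜} (hQ : IsStarProjection Q)
    (i : n) : RCLike.re (Q i i) ∈ Set.Icc 0 1 := by
  have hdiag : RCLike.re (Q i i) = ∑ j, ‖Q i j‖ ^ 2 := by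
    conv_lhs => rw [← hQ.isIdempotentElem.eq, mul_apply]
    rw [map_sum]
    refine Finset.sum_congr rfl fun j _ => ?_
    rw [← IsHermitian.apply hQ.isSelfAdjoint j i, RCLike.star_def, RCLike.mul_conj]
    norm_cast
  have hle : RCLike.re (Q i i) ^ 2 ≤ RCLike.re (Q i i) := calc
    RCLike.re (Q i i) ^ 2 ≤ ‖Q i i‖ ^ 2 :=
      sq_le_sq.mpr ((RCLike.abs_re_le_norm _).trans (le_abs_self _))
    _ ≤ RCLike.re (Q i i) :=
      hdiag ▸ Finset.single_le_sum (fun j _ => sq_nonneg ‖Q i j‖) (Finset.mem_univ i)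
  constructor <;> nlinarith

lemma mulVec_injective_of_conjTranspose_mul_self_eq_smul [Fintype n] [Fintype m] [DecidableEq m]
    {Y : Matrix n m 𝕜} {ρ : 𝕜} (hY : Yᴴ * Y = ρ • 1) (hρ : ρ ≠ 0) :
    Function.Injective Y.mulVec := by
  intro x y hxy
  have hρxy := congrArg (Yᴴ *ᵥ ·) hxy
  simp only [mulVec_mulVec, hY, smul_mulVec, one_mulVec] at hρxy
  exact smul_right_injective _ hρ hρxy

lemma diagonal_ofReal_sqrt_mul_self [Fintype n] [DecidableEq n] {lam : n → ℝ}
    (hlam : ∀ i, 0 ≤ lam i) :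
    diagonal (fun i => (√(lam i) : 𝕜)) * diagonal (fun i => (√(lam i) : 𝕜))
      = diagonal (fun i => (lam i : 𝕜)) := by
  rw [diagonal_mul_diagonal]
  congr 1 with i
  rw [← RCLike.ofReal_mul, Real.mul_self_sqrt (hlam i)]

lemma conjTranspose_diagonal_ofReal [DecidableEq n] (d : n → ℝ) :
    (diagonal (fun i => (d i : 𝕜)))ᴴ = diagonal (fun i => (d i : 𝕜)) := by
  simp [diagonal_conjTranspose, RCLike.star_def, RCLike.conj_ofReal]

theorem re_trace_inv_mul_diagonal_le {N T : ℕ} (hTN : T ≤ N) {lam : Fin N → ℝ}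
    (hmono : Antitone lam) (Z : Matrix (Fin N) (Fin T) 𝕜) (hZ : IsUnit (Zᴴ * Z).det) :
    RCLike.re ((Zᴴ * Z)⁻¹ * (Zᴴ * diagonal (fun i => (lam i : 𝕜)) * Z)).trace
      ≤ ∑ t : Fin T, lam (Fin.castLE hTN t) := by
  set P := Z * (Zᴴ * Z)⁻¹ * Zᴴ
  have hP : IsStarProjection P := isStarProjection_mul_inv_mul_conjTranspose Z hZ
  have htrace : ((Zᴴ * Z)⁻¹ * (Zᴴ * diagonal (fun i => (lam i : 𝕜)) * Z)).trace
      = ∑ i, P i i * lam i := by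
    rw [← Matrix.mul_assoc, ← Matrix.mul_assoc, trace_mul_comm, ← Matrix.mul_assoc,
      ← Matrix.mul_assoc]
    simp only [trace, diag, mul_diagonal]
    rfl
  have hsum : ∑ i, RCLike.re (P i i) = T := by
    simpa [trace] using congrArg RCLike.re (trace_mul_inv_mul_conjTranspose Z hZ)
  rw [htrace, map_sum]
  simp_rw [RCLike.re_mul_ofReal, mul_comm _ (lam _)]
  exact sum_mul_le_sum_castLE_of_antitone hTN hmono (fun i => (hP.re_diag_mem_Icc i).1)
    (fun i => (hP.re_diag_mem_Icc i).2) hsum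

theorem posDef_and_re_trace_le_of_diagonal {N T : ℕ} (hTN : T ≤ N) {lam : Fin N → ℝ}
    (hpos : ∀ i, 0 < lam i) (hmono : Antitone lam) {Y : Matrix (Fin N) (Fin T) 𝕜}
    (hY : Function.Injective Y.mulVec) :
    (Yᴴ * diagonal (fun i => (lam i : 𝕜)) * Y).PosDef
      ∧ RCLike.re ((Yᴴ * diagonal (fun i => (lam i : 𝕜)) * Y)⁻¹
          * (Yᴴ * (diagonal (fun i => (lam i : 𝕜)) * diagonal (fun i => (lam i : 𝕜))) * Y)).trace
        ≤ ∑ t : Fin T, lam (Fin.castLE hTN t) := by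
  set D := diagonal (fun i => (lam i : 𝕜))
  set S := diagonal (fun i => (√(lam i) : 𝕜))
  have hS : Sᴴ = S := conjTranspose_diagonal_ofReal _
  have hSS : S * S = D := diagonal_ofReal_sqrt_mul_self fun i => (hpos i).le
  have hB : (Yᴴ * D * Y).PosDef :=
    (posDef_diagonal_iff.mpr fun i => RCLike.ofReal_pos.mpr (hpos i)).conjTranspose_mul_mul_same
      hY
  have hZZ : (S * Y)ᴴ * (S * Y) = Yᴴ * D * Y := by
    rw [conjTranspose_mul, hS, ← hSS]
    simp only [Matrix.mul_assoc]
  have hZDZ : (S * Y)ᴴ * D * (S * Y) = Yᴴ * (D * D) * Y := by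
    rw [conjTranspose_mul, hS, ← hSS,
      show S * S * (S * S) = S * (S * S) * S by simp only [Matrix.mul_assoc]]
    simp only [Matrix.mul_assoc]
  have hbound := re_trace_inv_mul_diagonal_le hTN hmono (S * Y)
    (hZZ ▸ (isUnit_iff_isUnit_det _).mp hB.isUnit)
  rw [hZZ, hZDZ] at hbound
  exact ⟨hB, hbound⟩

theorem posDef_and_re_trace_le_of_unitary {N T : ℕ} (hTN : T ≤ N) {U : Matrix (Fin N) (Fin N) 𝕜}
    (hU1 : Uᴴ * U = 1) (hU2 : U * Uᴴ = 1) {lam : Fin N → ℝ} (hpos : ∀ i, 0 < lam i)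
    (hmono : Antitone lam) {A : Matrix (Fin N) (Fin N) 𝕜}
    (hA : A = U * diagonal (fun i => (lam i : 𝕜)) * Uᴴ) {ρ : 𝕜} (hρ : ρ ≠ 0)
    {X : Matrix (Fin N) (Fin T) 𝕜} (hX : Xᴴ * X = ρ • 1) :
    (Xᴴ * A * X).PosDef
      ∧ RCLike.re ((Xᴴ * A * X)⁻¹ * (Xᴴ * (A * A) * X)).trace
        ≤ ∑ t : Fin T, lam (Fin.castLE hTN t) := by
  set D := diagonal (fun i => (lam i : 𝕜))
  have hY : (Uᴴ * X)ᴴ * (Uᴴ * X) = ρ • 1 := by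
    rw [conjTranspose_mul, conjTranspose_conjTranspose, Matrix.mul_assoc, ← Matrix.mul_assoc U,
      hU2, Matrix.one_mul, hX]
  have hXAX : Xᴴ * A * X = (Uᴴ * X)ᴴ * D * (Uᴴ * X) := by
    simp only [hA, conjTranspose_mul, conjTranspose_conjTranspose, Matrix.mul_assoc]
  have hXA2X : Xᴴ * (A * A) * X = (Uᴴ * X)ᴴ * (D * D) * (Uᴴ * X) := by
    rw [hA, show U * D * Uᴴ * (U * D * Uᴴ) = U * D * (Uᴴ * U) * D * Uᴴ by
      simp only [Matrix.mul_assoc], hU1, Matrix.mul_one]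
    simp only [conjTranspose_mul, conjTranspose_conjTranspose, Matrix.mul_assoc]
  rw [hXAX, hXA2X]
  exact posDef_and_re_trace_le_of_diagonal hTN hpos hmono
    (mulVec_injective_of_conjTranspose_mul_self_eq_smul hY hρ)

theorem stmt_17_general (N T : ℕ) (hTN : T ≤ N)
    (ρ : ℝ) (hρ : 0 < ρ)
    (U : Matrix (Fin N) (Fin N) ℂ) (hU1 : Uᴴ * U = 1) (hU2 : U * Uᴴ = 1)
    (lam : Fin N → ℝ) (hpos : ∀ t, 0 < lam t) (hmono : Antitone lam)
    (A : Matrix (Fin N) (Fin N) ℂ)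
    (hA : A = U * Matrix.diagonal (fun t => (lam t : ℂ)) * Uᴴ)
    (Xopt : Matrix (Fin N) (Fin T) ℂ)
    (hXopt : Xopt = fun i t => (Real.sqrt ρ : ℂ) * U i (Fin.castLE hTN t)) :
    (∀ X : Matrix (Fin N) (Fin T) ℂ,
        Xᴴ * X = (ρ : ℂ) • (1 : Matrix (Fin T) (Fin T) ℂ) →
        (Xᴴ * A * X).PosDef
        ∧ ((Xᴴ * A * X)⁻¹ * (Xᴴ * (A * A) * X)).trace.re
            ≤ ∑ t : Fin T, lam (Fin.castLE hTN t))
    ∧ ((Xoptᴴ * A * Xopt)⁻¹ * (Xoptᴴ * (A * A) * Xopt)).trace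
        = ((∑ t : Fin T, lam (Fin.castLE hTN t) : ℝ) : ℂ) := by
  have hbound X (hX : Xᴴ * X = (ρ : ℂ) • 1) :=
    posDef_and_re_trace_le_of_unitary hTN hU1 hU2 hpos hmono hA (by exact_mod_cast hρ.ne') hX
  refine ⟨hbound, ?_⟩
  replace hXopt : Xopt = (√ρ : ℂ) • U.submatrix id (Fin.castLE hTN) := hXopt
  have hXX : Xoptᴴ * Xopt = (ρ : ℂ) • 1 := by
    rw [hXopt, conjTranspose_smul, Matrix.smul_mul, Matrix.mul_smul, smul_smul,
      conjTranspose_mul_self_submatrix_id hU1 (Fin.castLE_injective hTN), Complex.star_def,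
      Complex.conj_ofReal, ← Complex.ofReal_mul, Real.mul_self_sqrt hρ.le]
  have hAX : A * Xopt = Xopt * diagonal (fun t => (lam (Fin.castLE hTN t) : ℂ)) := by
    rw [hA, hXopt, Matrix.mul_smul, mul_submatrix_id_eq_submatrix_id_mul_diagonal hU1, smul_mul]
    rfl
  rw [trace_inv_mul_eq_trace_of_mul_eq_mul hAX
    ((isUnit_iff_isUnit_det _).mp (hbound Xopt hXX).1.isUnit), trace_diagonal]
  push_cast
  rfl

/-- high-SNR training objective bound: for Hermitian positive
definite `A = U diag(λ) Uᴴ` with `λ_1 ≥ ⋯ ≥ λ_N > 0` and any `X` with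
`Xᴴ X = ρ I_T`, the matrix `Xᴴ A X` is positive definite and
`tr((Xᴴ A X)⁻¹ Xᴴ A² X) ≤ Σ_{t=1}^T λ_t`, with equality for `X = √ρ U_{[1:T]}`. -/
theorem stmt_17 (N T : ℕ) (hT : 0 < T) (hTN : T ≤ N)
    (ρ : ℝ) (hρ : 0 < ρ)
    (U : Matrix (Fin N) (Fin N) ℂ) (hU1 : Uᴴ * U = 1) (hU2 : U * Uᴴ = 1)
    (lam : Fin N → ℝ) (hpos : ∀ t, 0 < lam t) (hmono : Antitone lam)
    (A : Matrix (Fin N) (Fin N) ℂ)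
    (hA : A = U * Matrix.diagonal (fun t => (lam t : ℂ)) * Uᴴ)
    (Xopt : Matrix (Fin N) (Fin T) ℂ)
    (hXopt : Xopt = fun i t => (Real.sqrt ρ : ℂ) * U i (Fin.castLE hTN t)) :
    (∀ X : Matrix (Fin N) (Fin T) ℂ,
        Xᴴ * X = (ρ : ℂ) • (1 : Matrix (Fin T) (Fin T) ℂ) →
        (Xᴴ * A * X).PosDef
        ∧ ((Xᴴ * A * X)⁻¹ * (Xᴴ * (A * A) * X)).trace.re
            ≤ ∑ t : Fin T, lam (Fin.castLE hTN t))
    ∧ ((Xoptᴴ * A * Xopt)⁻¹ * (Xoptᴴ * (A * A) * Xopt)).trace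
        = ((∑ t : Fin T, lam (Fin.castLE hTN t) : ℝ) : ℂ) :=
  stmt_17_general N T hTN ρ hρ U hU1 hU2 lam hpos hmono A hA Xopt hXopt
end

section
/- (Unitary invariance for full-length training, T = N_t) For every N_t × N_t unitary matrix V, setting X = √ρ V, one has tr( (I_{N_t} + X^H R X)^{-1} X^H R² X ) = Σ_{t=1}^{N_t} ρ λ_t² / (ρ λ_t + 1); in particular, when the training length equals N_t, every scaled unitary training matrix achieves the same (optimal) objective value. -/
open Matrix BigOperators

/-- unitary invariance for full-length training, `T = N_t`:
for every unitary `V` and `X = √ρ V`,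
`tr((I + Xᴴ R X)⁻¹ Xᴴ R² X) = Σ_{t=1}^{N_t} ρ λ_t²/(ρ λ_t + 1)`. -/
theorem stmt_18 (Nt : ℕ) (hNt : 0 < Nt) (ρ : ℝ) (hρ : 0 < ρ)
    (U : Matrix (Fin Nt) (Fin Nt) ℂ) (hU1 : Uᴴ * U = 1) (hU2 : U * Uᴴ = 1)
    (lam : Fin Nt → ℝ) (hnn : ∀ t, 0 ≤ lam t) (hmono : Antitone lam)
    (R : Matrix (Fin Nt) (Fin Nt) ℂ)
    (hR : R = U * Matrix.diagonal (fun t => (lam t : ℂ)) * Uᴴ) :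
    ∀ V : Matrix (Fin Nt) (Fin Nt) ℂ, Vᴴ * V = 1 → V * Vᴴ = 1 →
      ∀ X : Matrix (Fin Nt) (Fin Nt) ℂ, X = (Real.sqrt ρ : ℂ) • V →
        ((1 + Xᴴ * R * X)⁻¹ * (Xᴴ * (R * R) * X)).trace
          = ((∑ t : Fin Nt, ρ * lam t ^ 2 / (ρ * lam t + 1) : ℝ) : ℂ) := by
  intro V hV1 hV2 X hX
  set D : Matrix (Fin Nt) (Fin Nt) ℂ := Matrix.diagonal (fun t => (lam t : ℂ)) with hD
  set W : Matrix (Fin Nt) (Fin Nt) ℂ := Uᴴ * V with hWdef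
  have hWH : Wᴴ = Vᴴ * U := by
    rw [hWdef, Matrix.conjTranspose_mul, Matrix.conjTranspose_conjTranspose]
  have hW1 : Wᴴ * W = 1 := by
    rw [hWH, hWdef, Matrix.mul_assoc, ← Matrix.mul_assoc U, hU2, Matrix.one_mul, hV1]
  have hW2 : W * Wᴴ = 1 := by
    rw [hWH, hWdef, Matrix.mul_assoc, ← Matrix.mul_assoc V, hV2, Matrix.one_mul, hU1]
  have hWW : ∀ A : Matrix (Fin Nt) (Fin Nt) ℂ, W * (Wᴴ * A) = A := fun A => by
    rw [← Matrix.mul_assoc, hW2, Matrix.one_mul]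
  have hXH : Xᴴ = (Real.sqrt ρ : ℂ) • Vᴴ := by
    rw [hX, Matrix.conjTranspose_smul]
    congr 1
    simp
  have hsq : (Real.sqrt ρ : ℂ) * (Real.sqrt ρ : ℂ) = (ρ : ℂ) := by
    rw [← Complex.ofReal_mul, Real.mul_self_sqrt hρ.le]
  have hXRX : Xᴴ * R * X = Wᴴ * ((ρ : ℂ) • D) * W := by
    rw [hXH, hX, hR, hWH, hWdef]
    rw [Matrix.smul_mul, Matrix.smul_mul, Matrix.mul_smul, smul_smul, hsq]
    simp only [Matrix.smul_mul, Matrix.mul_smul]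
    congr 1
    simp only [Matrix.mul_assoc]
  have hRR : R * R = U * (D * D) * Uᴴ := by
    rw [hR]
    simp only [Matrix.mul_assoc]
    rw [← Matrix.mul_assoc Uᴴ U, hU1, Matrix.one_mul]
  have hXRRX : Xᴴ * (R * R) * X = Wᴴ * ((ρ : ℂ) • (D * D)) * W := by
    rw [hXH, hX, hRR, hWH, hWdef]
    rw [Matrix.smul_mul, Matrix.smul_mul, Matrix.mul_smul, smul_smul, hsq]
    simp only [Matrix.smul_mul, Matrix.mul_smul]
    congr 1
    simp only [Matrix.mul_assoc]
  set M : Matrix (Fin Nt) (Fin Nt) ℂ :=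
    Matrix.diagonal (fun t => ((ρ * lam t + 1 : ℝ) : ℂ)) with hM
  set N : Matrix (Fin Nt) (Fin Nt) ℂ :=
    Matrix.diagonal (fun t => ((ρ * lam t + 1 : ℝ) : ℂ)⁻¹) with hN
  have hdenR : ∀ t, (0 : ℝ) < ρ * lam t + 1 := by
    intro t
    have := mul_nonneg hρ.le (hnn t)
    linarith
  have hden : ∀ t, ((ρ * lam t + 1 : ℝ) : ℂ) ≠ 0 := by
    intro t
    exact_mod_cast ne_of_gt (hdenR t)
  have hMN : M * N = 1 := by
    rw [hM, hN, Matrix.diagonal_mul_diagonal]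
    have : (fun t => ((ρ * lam t + 1 : ℝ) : ℂ) * ((ρ * lam t + 1 : ℝ) : ℂ)⁻¹)
        = fun _ => (1 : ℂ) := funext fun t => mul_inv_cancel₀ (hden t)
    rw [this, Matrix.diagonal_one]
  have hsum : (1 : Matrix (Fin Nt) (Fin Nt) ℂ) + Xᴴ * R * X = Wᴴ * M * W := by
    rw [hXRX]
    have h1 : (1 : Matrix (Fin Nt) (Fin Nt) ℂ) + ((ρ:ℂ) • D) = M := by
      rw [hM, hD]
      ext i j
      rcases eq_or_ne i j with rfl | h
      · simp only [Matrix.add_apply, Matrix.smul_apply, Matrix.one_apply_eq,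
          Matrix.diagonal_apply_eq, smul_eq_mul]
        push_cast
        ring
      · simp [Matrix.one_apply_ne h, Matrix.diagonal_apply_ne _ h]
    rw [← h1, Matrix.mul_add, Matrix.add_mul, Matrix.mul_one, hW1]
  have hinv : (Wᴴ * M * W)⁻¹ = Wᴴ * N * W := by
    apply Matrix.inv_eq_right_inv
    calc Wᴴ * M * W * (Wᴴ * N * W) = Wᴴ * (M * (W * (Wᴴ * (N * W)))) := by
          simp only [Matrix.mul_assoc]
      _ = Wᴴ * (M * (N * W)) := by rw [hWW]
      _ = Wᴴ * (M * N * W) := by simp only [Matrix.mul_assoc]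
      _ = 1 := by rw [hMN, Matrix.one_mul, hW1]
  rw [hsum, hinv, hXRRX]
  have hprod : Wᴴ * N * W * (Wᴴ * ((ρ:ℂ) • (D * D)) * W)
      = Wᴴ * (N * ((ρ:ℂ) • (D * D))) * W := by
    calc Wᴴ * N * W * (Wᴴ * ((ρ:ℂ) • (D * D)) * W)
        = Wᴴ * (N * (W * (Wᴴ * (((ρ:ℂ) • (D * D)) * W)))) := by
          simp only [Matrix.mul_assoc]
      _ = Wᴴ * (N * (((ρ:ℂ) • (D * D)) * W)) := by rw [hWW]
      _ = Wᴴ * (N * ((ρ:ℂ) • (D * D))) * W := by simp only [Matrix.mul_assoc]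
  rw [hprod]
  have htr : (Wᴴ * (N * ((ρ:ℂ) • (D * D))) * W).trace
      = (N * ((ρ:ℂ) • (D * D))).trace := by
    rw [Matrix.trace_mul_cycle, ← Matrix.mul_assoc, hW2, Matrix.one_mul]
  rw [htr]
  rw [hN, hD, Matrix.mul_smul, Matrix.diagonal_mul_diagonal, Matrix.diagonal_mul_diagonal,
    Matrix.trace_smul, Matrix.trace_diagonal]
  push_cast
  rw [smul_eq_mul, Finset.mul_sum]
  apply Finset.sum_congr rfl
  intro t _
  rw [pow_two, div_eq_mul_inv]
  ring
end
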